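/- arXiv:1608.04675 — 7 statements merged into one kernel-verified Lean document; each statement's English description precedes it below -/
import Mathlib

section
/- For integers r, t, n with 2 ≤ r and t ≤ n, the number of edges of the Turán graph satisfies t_r(n - t) ≥ t_r(n) - (1 - 1/r)·t·n. -/
open SimpleGraph Finset
open scoped Classical

/-- `t_r(n)`: the number of edges of the `r`-partite Turán graph on `n` vertices. -/
noncomputable def turanEdges (r n : ℕ) : ℕ := (SimpleGraph.turanGraph n r).edgeFinset.card

/-! Deleting the last vertex `m` of `T_r(m + 1)` leaves `T_r(m)` and removes the `m - ⌊m/r⌋`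
edges from `m` to the `w < m` with `w ≢ m (mod r)`. As `r ⌊m/r⌋ ≥ m + 1 - r`, this is at most
`(1 - 1/r)(m + 1)`, hence at most `(1 - 1/r) n` while `m < n`; deleting `t` vertices one at a
time gives the bound. -/

lemma card_filter_range_modEq_self (r m : ℕ) : #{w ∈ range m | w ≡ m [MOD r]} = m / r := by
  rcases r.eq_zero_or_pos with rfl | hr
  · simp [Nat.ModEq]
  · simp [← Nat.count_eq_card_filter_range, Nat.count_modEq_card _ hr]

lemma card_filter_range_not_modEq_self (r m : ℕ) :
    #{w ∈ range m | ¬w ≡ m [MOD r]} = m - m / r := by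
  have := card_filter_add_card_filter_not (s := range m) (fun w => w ≡ m [MOD r])
  rw [card_range, card_filter_range_modEq_self] at this
  omega

lemma two_mul_turanEdges (r m : ℕ) :
    2 * turanEdges r m = ∑ v ∈ range m, ∑ w ∈ range m, if v ≡ w [MOD r] then 0 else 1 := by
  rw [turanEdges, ← sum_degrees_eq_twice_card_edges,
    ← Fin.sum_univ_eq_sum_range (fun v => ∑ w ∈ range m, if v ≡ w [MOD r] then 0 else 1)]
  refine sum_congr rfl fun v _ => ?_
  rw [degree, neighborFinset_eq_filter, card_filter,
    ← Fin.sum_univ_eq_sum_range (fun w => if (v : ℕ) ≡ w [MOD r] then 0 else 1)]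
  simp only [turanGraph_adj, ite_not]
  rfl

lemma turanEdges_succ (r m : ℕ) : turanEdges r (m + 1) = turanEdges r m + (m - m / r) := by
  have h : 2 * turanEdges r (m + 1) = 2 * turanEdges r m + 2 * (m - m / r) := by
    simp_rw [two_mul_turanEdges, sum_range_succ, sum_add_distrib, Nat.ModEq.refl, if_true,
      add_zero, ← card_filter_range_not_modEq_self, card_filter, ite_not, Nat.ModEq.comm (a := m)]
    ring
  omega

lemma turanEdges_le_turanEdges_sub_one_add (r m : ℕ) :
    (turanEdges r m : ℝ) ≤ turanEdges r (m - 1) + (1 - 1 / r) * m := by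
  cases m with
  | zero => simp
  | succ m =>
    rw [Nat.add_sub_cancel, turanEdges_succ, Nat.cast_add, Nat.cast_sub (Nat.div_le_self m r),
      add_le_add_iff_left, Nat.cast_succ]
    rcases r.eq_zero_or_pos with rfl | hr
    · simp
    have hr' : (0 : ℝ) < r := by exact_mod_cast hr
    have hdiv : (m : ℝ) + 1 ≤ r * (m / r : ℕ) + r := by exact_mod_cast Nat.lt_mul_div_succ m hr
    rw [one_sub_div hr'.ne', div_mul_eq_mul_div, le_div_iff₀ hr']
    nlinarith

theorem turanEdges_sub_ge_general (r t n : ℕ) :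
    (turanEdges r n : ℝ) - (1 - 1 / (r : ℝ)) * t * n ≤ (turanEdges r (n - t) : ℝ) := by
  have hcoeff : (0 : ℝ) ≤ 1 - 1 / r := by
    rw [sub_nonneg, one_div]
    exact Nat.cast_inv_le_one r
  induction t with
  | zero => simp
  | succ t ih =>
    have step : (turanEdges r (n - t) : ℝ) ≤ turanEdges r (n - (t + 1)) + (1 - 1 / r) * n :=
      calc (turanEdges r (n - t) : ℝ)
          ≤ turanEdges r (n - t - 1) + (1 - 1 / r) * (n - t : ℕ) :=
            turanEdges_le_turanEdges_sub_one_add r (n - t)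
        _ ≤ turanEdges r (n - (t + 1)) + (1 - 1 / r) * n := by
            rw [Nat.sub_sub]
            gcongr
            exact_mod_cast Nat.sub_le n t
    push_cast
    linarith

/-- For `2 ≤ r` and `t ≤ n`, `t_r(n - t) ≥ t_r(n) - (1 - 1/r)·t·n`. -/
theorem turanEdges_sub_ge (r t n : ℕ) (hr : 2 ≤ r) (ht : t ≤ n) :
    (turanEdges r n : ℝ) - (1 - 1 / (r : ℝ)) * t * n ≤ (turanEdges r (n - t) : ℝ) :=
  turanEdges_sub_ge_general r t n
end

section
/- Let r ≥ 2 and let G be a K_{r+1}-free graph on n vertices that is not r-partite (not r-colorable). Then G has a vertex v with degree d(v) ≤ ((3r-4)/(3r-1))·n. -/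
open SimpleGraph

theorem SimpleGraph.exists_degree_le_of_cliqueFree_of_not_colorable {V : Type*} [Fintype V]
    {G : SimpleGraph V} [DecidableRel G.Adj] {r : ℕ} (hfree : G.CliqueFree (r + 1))
    (hcol : ¬ G.Colorable r) :
    ∃ v, G.degree v ≤ (3 * r - 4) * Fintype.card V / (3 * r - 1) := by
  have : Nonempty V := not_isEmpty_iff.1 fun _ ↦ hcol (.of_isEmpty r)
  obtain ⟨v, hv⟩ := G.exists_minimal_degree_vertex
  exact ⟨v, hv ▸ not_lt.1 fun hlt ↦ hcol (colorable_of_cliqueFree_lt_minDegree hfree hlt)⟩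

/-- Andrásfai–Erdős–Sós. If `G` is a `K_{r+1}`-free graph on `n` vertices
which is not `r`-partite, then `G` has a vertex of degree at most `((3r-4)/(3r-1))·n`. -/
theorem andrasfai_erdos_sos {V : Type} [Fintype V] (r : ℕ) (hr : 2 ≤ r)
    (G : SimpleGraph V) [DecidableRel G.Adj]
    (hfree : G.CliqueFree (r + 1)) (hcol : ¬ G.Colorable r) :
    ∃ v : V, (G.degree v : ℝ) ≤ (3 * (r : ℝ) - 4) / (3 * (r : ℝ) - 1) * Fintype.card V := by
  obtain ⟨v, hv⟩ := exists_degree_le_of_cliqueFree_of_not_colorable hfree hcol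
  refine ⟨v, ?_⟩
  have hcast : (((3 * r - 4) * Fintype.card V : ℕ) : ℝ) / ((3 * r - 1 : ℕ) : ℝ)
      = (3 * (r : ℝ) - 4) / (3 * (r : ℝ) - 1) * Fintype.card V := by
    rw [Nat.cast_mul, Nat.cast_sub (by omega), Nat.cast_sub (by omega)]
    push_cast
    ring
  calc (G.degree v : ℝ) ≤ (((3 * r - 4) * Fintype.card V / (3 * r - 1) : ℕ) : ℝ) := by
        exact_mod_cast hv
    _ ≤ _ := Nat.cast_div_le
    _ = _ := hcast
end

section
/- Let r ≥ 2, n ≥ 2r+1, and let G be a K_{r+1}-free graph on n vertices. If e(G) ≥ t_r(n) - ⌊n/r⌋ + 2, then G is r-partite. -/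
open SimpleGraph Finset
open scoped Classical

/-!
Let `G` be `K_{r+1}`-free and not `r`-colourable on `n` vertices; we show
`e(G) + ⌊n/r⌋ ≤ t_r(n) + 1` by induction on `n`.

If some `G - v` has an `r`-colouring, every colour class meets `N(v)` (otherwise `v` could be
coloured too), and since `N(v)` spans no `K_r`, every transversal of the classes inside `N(v)`
misses an edge. Double counting transversals gives at least `2 |A_i| |A_j|` ordered non-adjacent
pairs across classes, where `A_i`, `A_j` are the two classes of `N(v)` with the smallest product.
The remaining edges are compared with the complete `r`-partite graph on the colour classes,
enlarged by one vertex in class `i` and one in class `j`; by Turán's theorem it has at most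
`t_r(n + 1)` edges.

Otherwise every `G - v` is again not `r`-colourable. As `e(G) < t_r(n) ≤ n (n - ⌊n/r⌋) / 2`, a
vertex of minimum degree has degree at most `n - 1 - ⌊n/r⌋`, while
`t_r(n) - t_r(n-1) = n - 1 - ⌊(n-1)/r⌋`, so the bound for `G - v` gives the bound for `G`.
-/

namespace Brouwer

open Fintype

section Deletion

variable {V : Type} [Fintype V] (G : SimpleGraph V) [DecidableRel G.Adj]

lemma card_edgeFinset_induce_compl_singleton_add_degree (v : V) :
    #(G.induce {v}ᶜ).edgeFinset + G.degree v = #G.edgeFinset := by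
  rw [card_edgeFinset_induce_compl_singleton, card_edgeFinset_deleteIncidenceSet,
    Nat.sub_add_cancel (G.degree_le_card_edgeFinset v)]

lemma card_compl_singleton (v : V) : card ↥({v}ᶜ : Set V) = card V - 1 := by
  rw [card_compl_set, Set.card_singleton]

lemma exists_card_mul_degree_le [Nonempty V] : ∃ v, card V * G.degree v ≤ 2 * #G.edgeFinset := by
  obtain ⟨v, hv⟩ := G.exists_minimal_degree_vertex
  refine ⟨v, ?_⟩
  calc card V * G.degree v = ∑ _w : V, G.degree v := by rw [sum_const, card_univ, smul_eq_mul]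
    _ ≤ ∑ w, G.degree w := sum_le_sum fun w _ => hv ▸ G.minDegree_le_degree w
    _ = 2 * #G.edgeFinset := G.sum_degrees_eq_twice_card_edges

variable {G} {r : ℕ} (v : V)

lemma card_filter_adj_eq_degree : #{w : ↥({v}ᶜ : Set V) | G.Adj v w} = G.degree v := by
  rw [← card_neighborFinset_eq_degree, ← card_map (Function.Embedding.subtype _)]
  congr 1
  ext w
  simp only [mem_map, mem_filter, mem_univ, true_and, Function.Embedding.subtype_apply,
    mem_neighborFinset]
  exact ⟨by rintro ⟨w, hw, rfl⟩; exact hw, fun hw => ⟨⟨w, hw.ne'⟩, hw, rfl⟩⟩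

lemma cliqueFreeOn_induce_compl_singleton (hG : G.CliqueFree (r + 1)) :
    (G.induce {v}ᶜ).CliqueFreeOn ↑({w | G.Adj v w} : Finset ↥({v}ᶜ : Set V)) r := by
  intro t ht htc
  rw [isNClique_induce_iff] at htc
  refine hG (insert v _) (htc.insert fun b hb => ?_)
  obtain ⟨w, hw, rfl⟩ := mem_map.1 hb
  simpa using ht hw

lemma filter_coloring_eq_nonempty (hnc : ¬G.Colorable r) (C : (G.induce {v}ᶜ).Coloring (Fin r))
    (c : Fin r) : ({w ∈ {w | G.Adj v w} | C w = c} : Finset ↥({v}ᶜ : Set V)).Nonempty := by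
  by_contra h
  simp only [not_nonempty_iff_eq_empty, filter_eq_empty_iff, mem_filter, mem_univ,
    true_and] at h
  refine hnc ⟨Coloring.mk (fun x => if hx : x = v then c else C ⟨x, hx⟩) fun {a b} hab => ?_⟩
  split_ifs with ha hb hb
  · exact absurd (ha.trans hb.symm) hab.ne
  · subst ha; exact fun hc => @h ⟨b, hb⟩ hab hc.symm
  · subst hb; exact @h ⟨a, ha⟩ hab.symm
  · exact C.valid (show (G.induce {v}ᶜ).Adj ⟨a, ha⟩ ⟨b, hb⟩ from hab)

end Deletion

section TuranNumbers

variable {V : Type} [Fintype V] {r : ℕ}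

lemma turanGraph_colorable (n : ℕ) (hr : 0 < r) : (turanGraph n r).Colorable r :=
  ⟨Coloring.mk (fun v => ⟨(v : ℕ) % r, Nat.mod_lt _ hr⟩)
    (fun h => by simpa [Fin.ext_iff, turanGraph_adj] using h)⟩

lemma card_edgeFinset_le_turanEdges (hr : 0 < r) {G : SimpleGraph V} [DecidableRel G.Adj]
    (hG : G.CliqueFree (r + 1)) : #G.edgeFinset ≤ turanEdges r (card V) := by
  obtain ⟨H, _, hH⟩ := exists_isTuranMaximal (V := V) hr
  rw [turanEdges, ← hH.nonempty_iso_turanGraph.some.card_edgeFinset_eq]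
  convert hH.2 hG

lemma card_edgeFinset_lt_turanEdges (hr : 0 < r) {G : SimpleGraph V} [DecidableRel G.Adj]
    (hG : G.CliqueFree (r + 1)) (hnc : ¬G.Colorable r) : #G.edgeFinset < turanEdges r (card V) := by
  refine (card_edgeFinset_le_turanEdges hr hG).lt_of_ne fun he => hnc ?_
  have hmax : G.IsTuranMaximal r :=
    ⟨hG, fun H _ hH => by convert he ▸ card_edgeFinset_le_turanEdges hr hH⟩
  exact (turanGraph_colorable _ hr).of_hom hmax.nonempty_iso_turanGraph.some.toHom

lemma two_mul_turanEdges_le (hr : 0 < r) (n : ℕ) : 2 * turanEdges r n ≤ n * (n - n / r) := by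
  have h := mul_card_edgeFinset_turanGraph_le (n := n) (r := r)
  have hq : r * (n / r) ≤ n := Nat.mul_div_le n r
  rw [turanEdges]
  refine Nat.le_of_mul_le_mul_left ?_ hr
  zify [Nat.div_le_self n r, show 1 ≤ r from hr] at h hq ⊢
  nlinarith

lemma exists_degree_add_div_lt (hr : 0 < r) {G : SimpleGraph V} [DecidableRel G.Adj] [Nonempty V]
    (he : #G.edgeFinset < turanEdges r (card V)) : ∃ v, G.degree v + card V / r < card V := by
  obtain ⟨v, hv⟩ := exists_card_mul_degree_le G
  refine ⟨v, Nat.add_lt_of_lt_sub (Nat.lt_of_mul_lt_mul_left (a := card V) ?_)⟩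
  have := two_mul_turanEdges_le hr (card V)
  omega

def turanGraphIsoInduceComplLast (m r : ℕ) :
    turanGraph m r ≃g (turanGraph (m + 1) r).induce {Fin.last m}ᶜ where
  toEquiv := (finSuccAboveEquiv (Fin.last m)).trans
    (Equiv.subtypeEquivRight fun _ => Set.mem_compl_singleton_iff.symm)
  map_rel_iff' := by simp [finSuccAboveEquiv_apply, turanGraph_adj]

lemma degree_turanGraph_last (hr : 0 < r) (m : ℕ) :
    (turanGraph (m + 1) r).degree (Fin.last m) = m - m / r := by
  have hcount : Nat.count (· ≡ m [MOD r]) (m + 1) = m / r + 1 := by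
    simp [Nat.count_succ, Nat.count_modEq_card m hr, Nat.ModEq.refl]
  have hnon : #{w : Fin (m + 1) | ¬(turanGraph (m + 1) r).Adj (Fin.last m) w} = m / r + 1 := by
    rw [← hcount, Nat.count_eq_card_filter_range, ← Nat.Iio_eq_range, ← Fin.map_valEmbedding_univ,
      filter_map, card_map]
    simp [turanGraph_adj, Nat.ModEq, eq_comm]
  have := card_filter_add_card_filter_not (s := univ)
    fun w => (turanGraph (m + 1) r).Adj (Fin.last m) w
  rw [hnon, card_univ, Fintype.card_fin, ← neighborFinset_eq_filter,
    card_neighborFinset_eq_degree] at this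
  omega

lemma turanEdges_succ (hr : 0 < r) (m : ℕ) :
    turanEdges r (m + 1) = turanEdges r m + (m - m / r) := by
  rw [turanEdges, ← card_edgeFinset_induce_compl_singleton_add_degree _ (Fin.last m),
    degree_turanGraph_last hr, turanEdges]
  congr 1
  convert (turanGraphIsoInduceComplLast m r).card_edgeFinset_eq.symm

lemma card_filter_eq_eq_sum_sq {ι : Type} [Fintype ι] [DecidableEq ι] (κ : V → ι) :
    #{ab : V × V | κ ab.1 = κ ab.2} = ∑ c, #{a | κ a = c} ^ 2 := by
  calc #{ab : V × V | κ ab.1 = κ ab.2} = ∑ a, #{b | κ b = κ a} := by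
        simp_rw [card_filter, Fintype.sum_prod_type, eq_comm]
    _ = ∑ c, ∑ a with κ a = c, #{b | κ b = c} := by
        rw [← sum_fiberwise univ κ]
        exact sum_congr rfl fun c _ => sum_congr rfl fun a ha => by rw [(mem_filter.1 ha).2]
    _ = ∑ c, #{a | κ a = c} ^ 2 := by simp [sum_const, sq]

lemma card_filter_ne_add_sum_sq {ι : Type} [Fintype ι] [DecidableEq ι] (κ : V → ι) :
    #{ab : V × V | κ ab.1 ≠ κ ab.2} + ∑ c, #{a | κ a = c} ^ 2 = card V ^ 2 := by
  rw [← card_filter_eq_eq_sum_sq, add_comm, card_filter_add_card_filter_not, card_univ,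
    card_prod, sq]

lemma card_filter_ne_le_two_mul_turanEdges (hr : 0 < r) (κ : V → Fin r) :
    #{ab : V × V | κ ab.1 ≠ κ ab.2} ≤ 2 * turanEdges r (card V) := by
  have hK : ((⊤ : SimpleGraph (Fin r)).comap κ).Colorable r := ⟨Coloring.mk κ fun h => h⟩
  calc #{ab : V × V | κ ab.1 ≠ κ ab.2} = 2 * #((⊤ : SimpleGraph (Fin r)).comap κ).edgeFinset := by
        rw [two_mul_card_edgeFinset]
        congr 1
    _ ≤ 2 * turanEdges r (card V) := by
        gcongr
        exact card_edgeFinset_le_turanEdges hr (hK.cliqueFree r.lt_add_one)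

lemma sq_sum_le_two_mul_turanEdges_add_sum_sq (hr : 0 < r) (x : Fin r → ℕ) :
    (∑ i, x i) ^ 2 ≤ 2 * turanEdges r (∑ i, x i) + ∑ i, x i ^ 2 := by
  have hfiber (i : Fin r) : #{a : Σ i, Fin (x i) | a.1 = i} = x i := by
    rw [← Fintype.card_subtype, card_congr (Equiv.sigmaSubtype i), Fintype.card_fin]
  have h := card_filter_ne_add_sum_sq (Sigma.fst : (Σ i, Fin (x i)) → Fin r)
  have h' := card_filter_ne_le_two_mul_turanEdges hr (Sigma.fst : (Σ i, Fin (x i)) → Fin r)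
  simp only [hfiber, Fintype.card_sigma, Fintype.card_fin] at h h'
  omega

end TuranNumbers

section Transversals

variable {ι α : Type} [Fintype ι] [DecidableEq α] (s : ι → Finset α)

lemma card_filter_piFinset_eq_mul_card {i : ι} {a : α} (ha : a ∈ s i) :
    #{f ∈ piFinset s | f i = a} * #(s i) = ∏ c, #(s c) := by
  rw [card_filter_piFinset_eq_of_mem s i ha, prod_erase_mul _ _ (mem_univ i)]

lemma card_filter_piFinset_eq_and_eq_mul {i j : ι} (hij : i ≠ j) {a b : α} (ha : a ∈ s i)
    (hb : b ∈ s j) :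
    #{f ∈ piFinset s | f i = a ∧ f j = b} * (#(s i) * #(s j)) = ∏ c, #(s c) := by
  have key := card_filter_piFinset_eq_mul_card (Function.update s i {a})
    (by rwa [Function.update_of_ne hij.symm] : b ∈ Function.update s i {a} j)
  rw [Function.update_of_ne hij.symm, ← card_piFinset,
    piFinset_update_singleton_eq_filter_piFinset_eq s i ha, filter_filter] at key
  rw [mul_comm #(s i), ← mul_assoc, key, card_filter_piFinset_eq_mul_card s ha]

variable {V : Type} {G : SimpleGraph V} {r : ℕ} {s : Finset V} {κ : V → Fin r}

lemma exists_not_adj_of_mem_piFinset (hs : G.CliqueFreeOn s r) {t : Fin r → V}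
    (ht : t ∈ piFinset fun c => {w ∈ s | κ w = c}) : ∃ i j, i ≠ j ∧ ¬G.Adj (t i) (t j) := by
  simp only [mem_piFinset, mem_filter] at ht
  by_contra! hadj
  have ht_inj : Function.Injective t := fun i j hij => by
    rw [← (ht i).2, ← (ht j).2, hij]
  refine hs (t := univ.map ⟨t, ht_inj⟩) ?_ ⟨?_, by simp⟩
  · simp [Set.subset_def, ht]
  · simp only [coe_map, coe_univ, Set.image_univ]
    rintro _ ⟨i, rfl⟩ _ ⟨j, rfl⟩ hne
    exact hadj i j (ne_of_apply_ne t hne)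

/-- Each transversal of the classes `A c = {w ∈ s | κ w = c}` spans a non-edge, and a non-adjacent
pair from classes `i ≠ j` lies in `∏ c, |A c| / (|A i| |A j|)` of the transversals. -/
lemma two_mul_le_card_filter_not_adj [DecidableRel G.Adj] (hs : G.CliqueFreeOn s r)
    (hne : ∀ c, ({w ∈ s | κ w = c} : Finset V).Nonempty) {p : ℕ}
    (hp : ∀ i j, i ≠ j → p ≤ #{w ∈ s | κ w = i} * #{w ∈ s | κ w = j}) :
    2 * p ≤ #{ab ∈ s ×ˢ s | κ ab.1 ≠ κ ab.2 ∧ ¬G.Adj ab.1 ab.2} := by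
  set A : Fin r → Finset V := fun c => {w ∈ s | κ w = c}
  set T := piFinset A
  set bad := {ab ∈ s ×ˢ s | κ ab.1 ≠ κ ab.2 ∧ ¬G.Adj ab.1 ab.2}
  have hA : ∀ {w c}, w ∈ A c ↔ w ∈ s ∧ κ w = c := mem_filter
  have two_le : ∀ t ∈ T, 2 ≤ #{ab ∈ bad | t (κ ab.1) = ab.1 ∧ t (κ ab.2) = ab.2} := by
    intro t ht
    obtain ⟨i, j, hij, hnadj⟩ := exists_not_adj_of_mem_piFinset hs ht
    have hi := hA.1 (mem_piFinset.1 ht i)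
    have hj := hA.1 (mem_piFinset.1 ht j)
    refine one_lt_card.2 ⟨(t i, t j), ?_, (t j, t i), ?_, fun h => hij ?_⟩
    · simp [bad, hi, hj, hij, hnadj]
    · simp [bad, hi, hj, hij.symm, hnadj, G.adj_comm]
    · rw [← hi.2, ← hj.2, (Prod.mk.inj h).1]
  have fiber_le : ∀ ab ∈ bad, p * #{t ∈ T | t (κ ab.1) = ab.1 ∧ t (κ ab.2) = ab.2} ≤ #T := by
    rintro ⟨a, b⟩ hab
    simp only [bad, mem_filter, mem_product] at hab
    calc p * _ ≤ _ * (#(A (κ a)) * #(A (κ b))) := by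
          rw [mul_comm]; exact Nat.mul_le_mul_left _ (hp _ _ hab.2.1)
      _ = #T := by
          rw [card_piFinset]
          convert card_filter_piFinset_eq_and_eq_mul A hab.2.1 (hA.2 ⟨hab.1.1, rfl⟩)
            (hA.2 ⟨hab.1.2, rfl⟩)
  have hT : 0 < #T := by
    rw [card_piFinset]
    exact prod_pos fun c _ => card_pos.2 (hne c)
  refine Nat.le_of_mul_le_mul_right ?_ hT
  calc 2 * p * #T = p * ∑ _t ∈ T, 2 := by rw [sum_const, smul_eq_mul]; ring
    _ ≤ p * ∑ t ∈ T, #{ab ∈ bad | t (κ ab.1) = ab.1 ∧ t (κ ab.2) = ab.2} := by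
        gcongr with t ht
        exact two_le t ht
    _ = ∑ ab ∈ bad, p * #{t ∈ T | t (κ ab.1) = ab.1 ∧ t (κ ab.2) = ab.2} := by
        simp_rw [card_filter, mul_sum]
        rw [sum_comm]
    _ ≤ ∑ _ab ∈ bad, #T := sum_le_sum fiber_le
    _ = #bad * #T := by rw [sum_const, smul_eq_mul]

end Transversals

section ColorableDeletion

variable {r : ℕ}

lemma exists_ne_forall_mul_le {ι : Type} [Fintype ι] [Nontrivial ι] (f : ι → ℕ) :
    ∃ i j, i ≠ j ∧ ∀ k l, k ≠ l → f i * f j ≤ f k * f l := by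
  obtain ⟨i, j, hij⟩ := exists_pair_ne ι
  obtain ⟨⟨i₀, j₀⟩, h₀, hmin⟩ := (univ : Finset ι).offDiag.exists_min_image
    (fun kl => f kl.1 * f kl.2) ⟨(i, j), by simpa using hij⟩
  exact ⟨i₀, j₀, (mem_offDiag.1 h₀).2.2, fun k l hkl => hmin (k, l) (by simpa using hkl)⟩

lemma sum_add_add_le_sum_add_add {ι : Type} [Fintype ι] {f g : ι → ℕ} (hfg : ∀ c, f c ≤ g c)
    {i j : ι} (hij : i ≠ j) : ∑ c, f c + g i + g j ≤ ∑ c, g c + f i + f j := by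
  have split (h : ι → ℕ) : ∑ c, h c = h i + h j + ∑ c ∈ (univ.erase i).erase j, h c := by
    rw [← add_sum_erase _ h (mem_univ i), ← add_sum_erase _ h (mem_erase.2 ⟨hij.symm, mem_univ j⟩),
      add_assoc]
  have := sum_le_sum (s := (univ.erase i).erase j) fun c _ => hfg c
  rw [split f, split g]
  omega

lemma two_mul_card_edgeFinset_add_card_filter_not_adj {W α : Type} [Fintype W] [DecidableEq α]
    {H : SimpleGraph W} [DecidableRel H.Adj] (C : H.Coloring α) :
    2 * #H.edgeFinset + #{ab : W × W | C ab.1 ≠ C ab.2 ∧ ¬H.Adj ab.1 ab.2} =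
      #{ab : W × W | C ab.1 ≠ C ab.2} := by
  rw [two_mul_card_edgeFinset, ← card_filter_add_card_filter_not (s := {ab : W × W | C ab.1 ≠ C ab.2})
    fun ab => H.Adj ab.1 ab.2, filter_filter, filter_filter]
  congr 2
  ext ab
  simpa using fun h => C.valid h

/-- The sizes `x` of the colour classes of `H`, with one extra vertex put in each of the classes
`i` and `j`, form a partition of `|W| + 2`. -/
lemma sq_card_add_two_le {W : Type} [Fintype W] {H : SimpleGraph W} (hr : 0 < r)
    (C : H.Coloring (Fin r)) {i j : Fin r} (hij : i ≠ j) :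
    (card W + 2) ^ 2 ≤ 2 * turanEdges r (card W + 2) + ∑ c, #{w | C w = c} ^ 2 +
      2 * #{w | C w = i} + 2 * #{w | C w = j} + 2 := by
  set x : Fin r → ℕ := fun c => #{w | C w = c}
  let y : Fin r → ℕ := fun c => x c + (if c = i then 1 else 0) + (if c = j then 1 else 0)
  have hy : ∑ c, y c = card W + 2 := by
    simp [y, x, sum_add_distrib, ← card_eq_sum_card_fiberwise fun _ _ => mem_univ _]
  have hy2 : ∑ c, y c ^ 2 = ∑ c, x c ^ 2 + 2 * x i + 2 * x j + 2 := by
    simp [y, add_sq, sum_add_distrib, mul_add, ite_pow, mul_ite, Ne.symm hij]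
    ring
  have := sq_sum_le_two_mul_turanEdges_add_sum_sq hr y
  rw [hy, hy2] at this
  linarith

/-- `H` stands for `G - v` and `s` for the neighbourhood of `v`, so that
`#H.edgeFinset + #s = e(G)`. -/
theorem card_edgeFinset_add_card_add_div_le (hr : 2 ≤ r) {W : Type} [Fintype W]
    {H : SimpleGraph W} [DecidableRel H.Adj] (C : H.Coloring (Fin r)) {s : Finset W}
    (hs : H.CliqueFreeOn s r) (hne : ∀ c, ({w ∈ s | C w = c} : Finset W).Nonempty) :
    #H.edgeFinset + #s + (card W + 1) / r ≤ turanEdges r (card W + 1) + 1 := by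
  have : Nontrivial (Fin r) := Fin.nontrivial_iff_two_le.2 hr
  set A : Fin r → ℕ := fun c => #{w ∈ s | C w = c}
  set x : Fin r → ℕ := fun c => #{w | C w = c}
  obtain ⟨i, j, hij, hmin⟩ := exists_ne_forall_mul_le A
  have hbad : 2 * (A i * A j) ≤ #{ab : W × W | C ab.1 ≠ C ab.2 ∧ ¬H.Adj ab.1 ab.2} :=
    (two_mul_le_card_filter_not_adj hs hne hmin).trans
      (card_le_card (filter_subset_filter _ (subset_univ _)))
  have hpairs := two_mul_card_edgeFinset_add_card_filter_not_adj C
  have hsq := card_filter_ne_add_sum_sq C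
  have hsum : #s + x i + x j ≤ card W + A i + A j := by
    have hs_card : #s = ∑ c, A c := card_eq_sum_card_fiberwise fun _ _ => mem_univ _
    have hW : card W = ∑ c, x c := card_eq_sum_card_fiberwise fun _ _ => mem_univ _
    rw [hs_card, hW]
    exact sum_add_add_le_sum_add_add
      (fun c => card_le_card (filter_subset_filter _ (subset_univ _))) hij
  have hAij : A i + A j ≤ A i * A j + 1 := by
    have hi : 1 ≤ A i := card_pos.2 (hne i)
    have hj : 1 ≤ A j := card_pos.2 (hne j)
    nlinarith
  have hturan := sq_card_add_two_le (by omega) C hij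
  have hsucc := turanEdges_succ (r := r) (by omega) (card W + 1)
  have hq := Nat.div_le_self (card W + 1) r
  have h2 : (card W + 2) ^ 2 = card W ^ 2 + 4 * card W + 4 := by ring
  zify [hq] at *
  linarith

end ColorableDeletion


theorem card_edgeFinset_add_div_le_of_not_colorable {r : ℕ} (hr : 2 ≤ r) (n : ℕ) :
    ∀ {V : Type} [Fintype V] (G : SimpleGraph V) [DecidableRel G.Adj], card V = n →
      G.CliqueFree (r + 1) → ¬G.Colorable r → #G.edgeFinset + n / r ≤ turanEdges r n + 1 := by
  induction n using Nat.strong_induction_on with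
  | _ n ih =>
  intro V _ G _ hn hG hnc
  have : Nonempty V := not_isEmpty_iff.1 fun _ => hnc (.of_isEmpty r)
  have hcompl (v : V) : card ↥({v}ᶜ : Set V) = n - 1 := by rw [card_compl_singleton, hn]
  have hn0 : 0 < n := hn ▸ card_pos
  by_cases hA : ∃ v, (G.induce {v}ᶜ).Colorable r
  · obtain ⟨v, ⟨C⟩⟩ := hA
    have := card_edgeFinset_add_card_add_div_le hr C (cliqueFreeOn_induce_compl_singleton v hG)
      (filter_coloring_eq_nonempty v hnc C)
    rwa [card_filter_adj_eq_degree, card_edgeFinset_induce_compl_singleton_add_degree,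
      hcompl, Nat.sub_add_cancel hn0] at this
  · simp only [not_exists] at hA
    obtain ⟨v, hv⟩ := exists_degree_add_div_lt (r := r) (by omega)
      (card_edgeFinset_lt_turanEdges (by omega) hG hnc)
    have hih := ih (n - 1) (by omega) (G.induce {v}ᶜ) (hcompl v)
      (hG.comap ⟨Copy.induce G {v}ᶜ⟩) (hA v)
    have hsucc := turanEdges_succ (r := r) (by omega) (n - 1)
    have hdel := card_edgeFinset_induce_compl_singleton_add_degree G v
    have hq := Nat.div_le_self (n - 1) r
    rw [Nat.sub_add_cancel hn0] at hsucc
    rw [hn] at hv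
    omega

end Brouwer

theorem brouwer_general {V : Type} [Fintype V] (r n : ℕ) (hr : 2 ≤ r)
    (hcard : Fintype.card V = n)
    (G : SimpleGraph V) (hfree : G.CliqueFree (r + 1))
    (he : (turanEdges r n : ℤ) - ((n / r : ℕ) : ℤ) + 2 ≤ (G.edgeFinset.card : ℤ)) :
    G.Colorable r := by
  by_contra hnc
  have := Brouwer.card_edgeFinset_add_div_le_of_not_colorable hr n G hcard hfree hnc
  omega

/-- Brouwer. If `r ≥ 2`, `n ≥ 2r+1` and `G` is a `K_{r+1}`-free graph on `n`
vertices with `e(G) ≥ t_r(n) - ⌊n/r⌋ + 2`, then `G` is `r`-partite. -/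
theorem brouwer {V : Type} [Fintype V] (r n : ℕ) (hr : 2 ≤ r)
    (hcard : Fintype.card V = n) (hn : 2 * r + 1 ≤ n)
    (G : SimpleGraph V) (hfree : G.CliqueFree (r + 1))
    (he : (turanEdges r n : ℤ) - ((n / r : ℕ) : ℤ) + 2 ≤ (G.edgeFinset.card : ℤ)) :
    G.Colorable r :=
  brouwer_general r n hr hcard G hfree he
end

section
/- For every r ≥ 2 there is a constant d_r depending only on r such that: if n ≥ 4r, 0 ≤ ε ≤ 1/(30r³), and G is an n-vertex K_{r+1}-free graph with e(G) ≥ t_r(n) - εn², then there is a set T ⊆ V(G) with |T| ≤ d_r·ε·n such that G − T is r-partite. -/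
/-!
Füredi's greedy partition: let `D₀ = V`, and let `D_{i+1}` be the neighbourhood inside `D_i` of a
vertex with the most neighbours in `D_i`. Since the chosen vertices form a clique, `D_r = ∅` when
`G` is `K_{r+1}`-free, and the layers `D_i \ D_{i+1}` partition `V` into `r` parts with
`e(G) + e(G inside the parts) ≤ e(K)`, `K` the complete `r`-partite graph on the parts.
As `e(K) ≤ t_r(n) ≤ e(G) + εn²`, `K` misses at most `2εn²` cross pairs of `G` and, by convexity,
every part has size `n/r ± O(√ε n)`. Delete the vertices missing more than `n/(20r)` cross pairs,
at most `80rεn` of them. An edge of what is left inside a part extends, one part at a time, to a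
`K_{r+1}`: each part is so large that its few vertices missing many cross pairs, together with the
non-neighbours of the clique built so far, cannot exhaust it. If `εn² < 1`, then `e(G) ≥ t_r(n)`
and the partition itself is proper.
-/

open SimpleGraph Finset
open scoped Classical

theorem sum_sq_le_of_forall_eq_or_eq_add_one {ι : Type*} [Fintype ι] (f : ι → ℕ) (q : ℕ)
    (hf : ∀ i, f i = q ∨ f i = q + 1) :
    ∑ i, (f i : ℝ) ^ 2 ≤ (∑ i, (f i : ℝ)) ^ 2 / Fintype.card ι + Fintype.card ι / 4 := by
  -- on `{q, q + 1}` the square agrees with the chord `(2q + 1) x - q (q + 1)`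
  have hsq (i : ι) : (f i : ℝ) ^ 2 = (2 * q + 1) * f i - q * (q + 1) := by
    rcases hf i with h | h <;> simp [h] <;> ring
  rcases (Fintype.card ι).eq_zero_or_pos with hk | hk
  · simp [Fintype.card_eq_zero_iff.mp hk]
  have hk' : (0 : ℝ) < Fintype.card ι := by exact_mod_cast hk
  rw [sum_congr rfl fun i _ => hsq i, sum_sub_distrib, ← mul_sum, sum_const, card_univ,
    nsmul_eq_mul, div_add_div _ _ hk'.ne' four_ne_zero, le_div_iff₀ (by positivity)]
  nlinarith [sq_nonneg (2 * ∑ i, (f i : ℝ) - Fintype.card ι * (2 * q + 1))]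

theorem sq_sub_average_le {ι : Type*} [Fintype ι] (b : ι → ℝ) (j : ι) :
    (b j - (∑ i, b i) / Fintype.card ι) ^ 2
      ≤ ∑ i, b i ^ 2 - (∑ i, b i) ^ 2 / Fintype.card ι := by
  have hk : (0 : ℝ) < Fintype.card ι := by exact_mod_cast Fintype.card_pos_iff.mpr ⟨j⟩
  set m := (∑ i, b i) / Fintype.card ι
  have hvar : ∑ i, (b i - m) ^ 2 = ∑ i, b i ^ 2 - (∑ i, b i) ^ 2 / Fintype.card ι := by
    simp only [sub_sq, sum_add_distrib, sum_sub_distrib, ← sum_mul, ← mul_sum, sum_const, card_univ,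
      nsmul_eq_mul, m]
    field_simp
    ring
  exact hvar ▸ single_le_sum (f := fun i => (b i - m) ^ 2) (fun i _ => sq_nonneg _) (mem_univ j)

theorem card_filter_le_sum_div {α : Type*} [Fintype α] {f : α → ℝ} (hf : ∀ a, 0 ≤ f a) {θ : ℝ}
    (hθ : 0 < θ) : (#{a | θ ≤ f a} : ℝ) ≤ (∑ a, f a) / θ := by
  rw [le_div_iff₀ hθ, ← nsmul_eq_mul]
  exact (card_nsmul_le_sum _ _ _ fun a ha => (mem_filter.mp ha).2).trans
    (sum_le_sum_of_subset_of_nonneg (subset_univ _) fun a _ _ => hf a)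

theorem add_thresholds_lt_of_sq_sub_le {r n ε b t : ℝ} (hr : 2 ≤ r) (hn0 : 0 < n)
    (hn : 30 * r ^ 3 ≤ n ^ 2) (hεr : 30 * r ^ 3 * ε ≤ 1)
    (hb : (b - n / r) ^ 2 ≤ r / 4 + 2 * ε * n ^ 2) (ht : t ≤ 11 * r ^ 2 * ε * n) :
    t + 2 * (n / (20 * r)) + (r - 2) * (4 * n / (11 * r ^ 2)) < b := by
  have hr0 : 0 < r := by linarith
  obtain ⟨m, rfl⟩ : ∃ m, n = r * m := ⟨n / r, by field_simp⟩
  have hm : 0 < m := pos_of_mul_pos_right hn0 hr0.le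
  have hm2 : 30 * r ≤ m ^ 2 := le_of_mul_le_mul_left (by nlinarith) (by positivity : 0 < r ^ 2)
  have hthresholds : 2 * (r * m / (20 * r)) + (r - 2) * (4 * (r * m) / (11 * r ^ 2))
      = m / 10 + (r - 2) * (4 * m / (11 * r)) := by
    field_simp
    ring
  rw [add_assoc, hthresholds, ← add_assoc]
  rw [mul_div_cancel_left₀ m hr0.ne'] at hb
  -- in a part of size about `m = n / r` the thresholds leave a margin of at least
  -- `m (28/165 + 8/(11r))`, and its square beats `r/4 + 2εn² ≥ (b - m)²`
  have hmargin :
      m * (28 / 165 + 8 / (11 * r)) ≤ m - (t + m / 10 + (r - 2) * (4 * m / (11 * r))) := by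
    have : t ≤ 11 / 30 * m := by nlinarith
    field_simp
    nlinarith
  have hmargin_pos : 0 < m * (28 / 165 + 8 / (11 * r)) := by positivity
  have hmargin_sq : r / 4 + 2 * ε * (r * m) ^ 2 < (m * (28 / 165 + 8 / (11 * r))) ^ 2 := by
    have h1 : r / 4 ≤ m ^ 2 / 120 := by linarith
    have h2 : 2 * ε * (r * m) ^ 2 ≤ m ^ 2 / (15 * r) := by
      rw [le_div_iff₀ (by positivity)]
      nlinarith [sq_nonneg m]
    have h3 : m ^ 2 / 120 + m ^ 2 / (15 * r) < (m * (28 / 165 + 8 / (11 * r))) ^ 2 := by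
      field_simp
      nlinarith [sq_nonneg m, mul_pos hm hm]
    linarith
  have := abs_lt_of_sq_lt_sq
    (hb.trans_lt (hmargin_sq.trans_le (pow_le_pow_left₀ hmargin_pos.le hmargin 2)))
    (hmargin_pos.le.trans hmargin)
  linarith [(abs_lt.mp this).1]

namespace SimpleGraph

abbrev completeMultipartiteOf {V ι : Type*} (c : V → ι) : SimpleGraph V :=
  (⊤ : SimpleGraph ι).comap c

theorem colorable_completeMultipartiteOf {V : Type*} {r : ℕ} (c : V → Fin r) :
    (completeMultipartiteOf c).Colorable r :=
  ⟨Coloring.mk c id⟩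

section InnerDegree

variable {V : Type*} (G : SimpleGraph V)

noncomputable def innerDegreeSum (S : Finset V) : ℕ := ∑ v ∈ S, #{w ∈ S | G.Adj v w}

theorem sum_card_filter_adj_comm (A B : Finset V) :
    ∑ v ∈ A, #{w ∈ B | G.Adj v w} = ∑ v ∈ B, #{w ∈ A | G.Adj v w} := by
  simpa only [bipartiteAbove, bipartiteBelow, G.adj_comm _] using
    sum_card_bipartiteAbove_eq_sum_card_bipartiteBelow (s := A) (t := B) (r := G.Adj)

theorem innerDegreeSum_union_add {A B : Finset V} (h : Disjoint A B) :
    G.innerDegreeSum (A ∪ B) + G.innerDegreeSum B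
      = G.innerDegreeSum A + 2 * ∑ v ∈ B, #{w ∈ A ∪ B | G.Adj v w} := by
  have hsplit (v : V) :
      #{w ∈ A ∪ B | G.Adj v w} = #{w ∈ A | G.Adj v w} + #{w ∈ B | G.Adj v w} := by
    rw [filter_union, card_union_of_disjoint (disjoint_filter_filter h)]
  have hA : ∑ v ∈ A, #{w ∈ A ∪ B | G.Adj v w}
      = G.innerDegreeSum A + ∑ v ∈ B, #{w ∈ A | G.Adj v w} := by
    rw [sum_congr rfl fun v _ => hsplit v, sum_add_distrib, G.sum_card_filter_adj_comm A B,
      innerDegreeSum]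
  have hB : ∑ v ∈ B, #{w ∈ A ∪ B | G.Adj v w}
      = ∑ v ∈ B, #{w ∈ A | G.Adj v w} + G.innerDegreeSum B := by
    rw [sum_congr rfl fun v _ => hsplit v, sum_add_distrib, innerDegreeSum]
  rw [innerDegreeSum, sum_union h, hA]
  omega

theorem innerDegreeSum_univ [Fintype V] : G.innerDegreeSum univ = 2 * #G.edgeFinset := by
  rw [← sum_degrees_eq_twice_card_edges, innerDegreeSum]
  simp [← card_neighborFinset_eq_degree, neighborFinset_eq_filter]

end InnerDegree

section Multipartite

variable {V ι : Type*} [Fintype V] [Fintype ι] [DecidableEq ι]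

theorem sum_card_fiber_eq_card (c : V → ι) : ∑ i, #{v | c v = i} = Fintype.card V := by
  rw [← card_univ, card_eq_sum_card_fiberwise (f := c) (t := univ) fun _ _ => mem_univ _]

theorem two_mul_card_edgeFinset_completeMultipartiteOf_add_sum_sq (c : V → ι) :
    2 * #(completeMultipartiteOf c).edgeFinset + ∑ i, #{v | c v = i} ^ 2
      = Fintype.card V ^ 2 := by
  have hdeg (v : V) :
      (completeMultipartiteOf c).degree v + #{w | c w = c v} = Fintype.card V := by
    rw [← card_neighborFinset_eq_degree, neighborFinset_eq_filter, add_comm, ← card_univ]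
    simpa [eq_comm] using card_filter_add_card_filter_not (s := univ) fun w => c w = c v
  have hfib : ∑ i, #{v | c v = i} ^ 2 = ∑ v, #{w | c w = c v} := by
    rw [← sum_fiberwise' univ c fun i => #{w | c w = i}]
    simp [sq]
  rw [← sum_degrees_eq_twice_card_edges, hfib, ← sum_add_distrib,
    sum_congr rfl fun v _ => hdeg v, sum_const, card_univ, smul_eq_mul, sq]

theorem two_mul_card_edgeFinset_sdiff_completeMultipartiteOf (G : SimpleGraph V) (c : V → ι) :
    2 * #(G \ completeMultipartiteOf c).edgeFinset = ∑ i, G.innerDegreeSum {v | c v = i} := by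
  have hdeg (v : V) :
      (G \ completeMultipartiteOf c).degree v = #{w ∈ {u | c u = c v} | G.Adj v w} := by
    rw [← card_neighborFinset_eq_degree, neighborFinset_eq_filter, filter_filter]
    simp [and_comm, eq_comm]
  calc 2 * #(G \ completeMultipartiteOf c).edgeFinset
      = ∑ v, #{w ∈ {u | c u = c v} | G.Adj v w} := by
        rw [← sum_congr rfl fun v _ => hdeg v]
        convert (sum_degrees_eq_twice_card_edges _).symm
    _ = ∑ i, G.innerDegreeSum {v | c v = i} := by
        rw [← sum_fiberwise univ c]
        refine sum_congr rfl fun i _ => sum_congr rfl fun v hv => ?_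
        rw [(mem_filter.mp hv).2]

end Multipartite

theorem card_edgeFinset_sdiff_add_card {V : Type*} [Fintype V] (G H : SimpleGraph V)
    [Fintype G.edgeSet] [Fintype H.edgeSet] :
    #(H \ G).edgeFinset + #G.edgeFinset = #H.edgeFinset + #(G \ H).edgeFinset := by
  simp only [edgeFinset_sdiff, card_sdiff_add_card, union_comm H.edgeFinset,
    add_comm #H.edgeFinset]

theorem CliqueFree.card_edgeFinset_le_turanEdges {V : Type*} [Fintype V] {G : SimpleGraph V}
    [DecidableRel G.Adj] {r : ℕ} (hG : G.CliqueFree (r + 1)) :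
    #G.edgeFinset ≤ turanEdges r (Fintype.card V) := by
  convert hG.card_edgeFinset_le
  rw [turanEdges, ← card_edgeFinset_turanGraph]

theorem card_edgeFinset_completeMultipartiteOf_le {V : Type*} [Fintype V] {r : ℕ}
    (c : V → Fin r) : #(completeMultipartiteOf c).edgeFinset ≤ turanEdges r (Fintype.card V) :=
  ((colorable_completeMultipartiteOf c).cliqueFree r.lt_succ_self).card_edgeFinset_le_turanEdges

theorem turanGraph_eq_completeMultipartiteOf {n r : ℕ} (hr : 0 < r) :
    turanGraph n r
      = completeMultipartiteOf fun v : Fin n => (⟨v % r, Nat.mod_lt _ hr⟩ : Fin r) := by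
  ext v w
  simp [turanGraph_adj, Fin.ext_iff]

theorem card_filter_val_mod_eq {n r : ℕ} (hr : 0 < r) (j : Fin r) :
    #{v : Fin n | (v : ℕ) % r = j} = n / r ∨ #{v : Fin n | (v : ℕ) % r = j} = n / r + 1 := by
  have h : #{v : Fin n | (v : ℕ) % r = j} = Nat.count (· ≡ j [MOD r]) n := by
    rw [Nat.count_eq_card_filter_range, card_filter, card_filter,
      Fin.sum_univ_eq_sum_range fun k => if k % r = j then 1 else 0]
    simp [Nat.ModEq, Nat.mod_eq_of_lt j.isLt]
  rw [h, Nat.count_modEq_card n hr]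
  split_ifs <;> simp

theorem sq_sub_two_mul_turanEdges_le {r : ℕ} (hr : 0 < r) (n : ℕ) :
    (n : ℝ) ^ 2 - 2 * turanEdges r n ≤ (n : ℝ) ^ 2 / r + r / 4 := by
  set c : Fin n → Fin r := fun v => ⟨v % r, Nat.mod_lt _ hr⟩
  have hid := two_mul_card_edgeFinset_completeMultipartiteOf_add_sum_sq c
  have hsum := sum_card_fiber_eq_card c
  have hbal := sum_sq_le_of_forall_eq_or_eq_add_one (fun j => #{v | c v = j}) (n / r)
    fun j => by simpa [c, Fin.ext_iff] using card_filter_val_mod_eq (n := n) hr j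
  have ht : turanEdges r n = #(completeMultipartiteOf c).edgeFinset := by
    unfold turanEdges
    convert rfl using 3
    exact (turanGraph_eq_completeMultipartiteOf hr).symm
  simp only [Fintype.card_fin] at hid hsum hbal
  rw [← Nat.cast_inj (R := ℝ)] at hid hsum
  push_cast at hid hsum hbal
  rw [hsum] at hbal
  rw [ht]
  linarith

section GreedyPartition

variable {V : Type*} (G : SimpleGraph V)

noncomputable def greedyStep (S : Finset V) : Finset V :=
  if h : S.Nonempty then
    {w ∈ S | G.Adj (S.exists_max_image (fun v => #{w ∈ S | G.Adj v w}) h).choose w}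
  else ∅

theorem exists_greedyStep_eq {S : Finset V} (hS : S.Nonempty) :
    ∃ x ∈ S, G.greedyStep S = {w ∈ S | G.Adj x w} ∧
      ∀ v ∈ S, #{w ∈ S | G.Adj v w} ≤ #{w ∈ S | G.Adj x w} := by
  obtain ⟨hx, hmax⟩ := (S.exists_max_image (fun v => #{w ∈ S | G.Adj v w}) hS).choose_spec
  exact ⟨_, hx, dif_pos hS, hmax⟩

theorem greedyStep_subset (S : Finset V) : G.greedyStep S ⊆ S := by
  rcases S.eq_empty_or_nonempty with rfl | hS
  · simp [greedyStep]
  · obtain ⟨x, -, hx, -⟩ := G.exists_greedyStep_eq hS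
    exact hx ▸ filter_subset _ _

theorem card_filter_adj_le_card_greedyStep {S : Finset V} {v : V} (hv : v ∈ S) :
    #{w ∈ S | G.Adj v w} ≤ #(G.greedyStep S) := by
  obtain ⟨x, -, hx, hmax⟩ := G.exists_greedyStep_eq ⟨v, hv⟩
  exact hx ▸ hmax v hv

theorem innerDegreeSum_add_innerDegreeSum_sdiff_greedyStep_le (S : Finset V) :
    G.innerDegreeSum S + G.innerDegreeSum (S \ G.greedyStep S) + #(S \ G.greedyStep S) ^ 2
      + #(G.greedyStep S) ^ 2 ≤ G.innerDegreeSum (G.greedyStep S) + #S ^ 2 := by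
  set S' := G.greedyStep S
  have hS : S' ∪ (S \ S') = S := union_sdiff_of_subset (G.greedyStep_subset S)
  have hcard : #S = #S' + #(S \ S') := by rw [← card_union_of_disjoint disjoint_sdiff, hS]
  have hunion := G.innerDegreeSum_union_add (disjoint_sdiff (s := S') (t := S))
  rw [hS] at hunion
  have hmax : ∑ v ∈ S \ S', #{w ∈ S | G.Adj v w} ≤ #(S \ S') * #S' := by
    simpa using sum_le_card_nsmul _ _ _ fun v hv =>
      G.card_filter_adj_le_card_greedyStep (mem_sdiff.mp hv).1
  rw [hcard]
  nlinarith

variable [Fintype V]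

noncomputable def greedyChain (i : ℕ) : Finset V := (G.greedyStep)^[i] univ

theorem greedyChain_succ (i : ℕ) : G.greedyChain (i + 1) = G.greedyStep (G.greedyChain i) :=
  Function.iterate_succ_apply' _ _ _

theorem greedyChain_antitone : Antitone G.greedyChain :=
  antitone_nat_of_succ_le fun i => (G.greedyChain_succ i).symm ▸ G.greedyStep_subset _

theorem exists_isNClique_of_subset_greedyChain (i : ℕ) {k : ℕ} {s : Finset V}
    (hs : G.IsNClique k s) (hne : s.Nonempty) (hsub : s ⊆ G.greedyChain i) :
    ∃ t, G.IsNClique (k + i) t := by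
  induction i generalizing k s with
  | zero => exact ⟨s, hs⟩
  | succ i ih =>
    rw [greedyChain_succ] at hsub
    obtain ⟨x, hx, hstep, -⟩ :=
      G.exists_greedyStep_eq (hne.mono (hsub.trans (G.greedyStep_subset _)))
    rw [hstep] at hsub
    obtain ⟨t, ht⟩ := ih (hs.insert fun w hw => (mem_filter.mp (hsub hw)).2)
      (insert_nonempty _ _) (insert_subset hx (hsub.trans (filter_subset _ _)))
    exact ⟨t, by rwa [add_assoc, add_comm 1] at ht⟩

theorem greedyChain_eq_empty {r : ℕ} (hG : G.CliqueFree (r + 1)) : G.greedyChain r = ∅ := by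
  refine eq_empty_of_forall_notMem fun v hv => ?_
  obtain ⟨t, ht⟩ := G.exists_isNClique_of_subset_greedyChain r (isNClique_singleton.mpr rfl)
    (singleton_nonempty v) (singleton_subset_iff.mpr hv)
  exact hG t (by rwa [add_comm] at ht)

theorem innerDegreeSum_univ_add_sum_le (k : ℕ) :
    G.innerDegreeSum univ
      + ∑ i ∈ range k, (G.innerDegreeSum (G.greedyChain i \ G.greedyChain (i + 1))
        + #(G.greedyChain i \ G.greedyChain (i + 1)) ^ 2) + #(G.greedyChain k) ^ 2
      ≤ G.innerDegreeSum (G.greedyChain k) + Fintype.card V ^ 2 := by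
  induction k with
  | zero => simp [greedyChain]
  | succ k ih =>
    have hstep := G.innerDegreeSum_add_innerDegreeSum_sdiff_greedyStep_le (G.greedyChain k)
    rw [← greedyChain_succ] at hstep
    rw [sum_range_succ]
    omega

noncomputable def greedyColor (r : ℕ) (v : V) : ℕ := Nat.findGreatest (v ∈ G.greedyChain ·) r

theorem mem_greedyChain_iff {r i : ℕ} (hi : i ≤ r) (v : V) :
    v ∈ G.greedyChain i ↔ i ≤ G.greedyColor r v := by
  refine ⟨fun h => Nat.le_findGreatest hi h, fun h => G.greedyChain_antitone h ?_⟩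
  exact Nat.findGreatest_spec (P := (v ∈ G.greedyChain ·)) (Nat.zero_le r)
    (by simp [greedyChain])

theorem greedyColor_lt {r : ℕ} (hG : G.CliqueFree (r + 1)) (v : V) : G.greedyColor r v < r := by
  refine (Nat.findGreatest_le r).lt_of_ne fun h => ?_
  simpa [G.greedyChain_eq_empty hG] using (G.mem_greedyChain_iff le_rfl v).mpr h.ge

end GreedyPartition

theorem CliqueFree.exists_card_edgeFinset_add_le {V : Type*} [Fintype V] {G : SimpleGraph V}
    {r : ℕ} (hG : G.CliqueFree (r + 1)) :
    ∃ c : V → Fin r, #G.edgeFinset + #(G \ completeMultipartiteOf c).edgeFinset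
      ≤ #(completeMultipartiteOf c).edgeFinset := by
  set c : V → Fin r := fun v => ⟨G.greedyColor r v, G.greedyColor_lt hG v⟩
  have hfiber (i : Fin r) :
      ({v | c v = i} : Finset V) = G.greedyChain i \ G.greedyChain (i + 1) := by
    ext v
    simp only [mem_filter, mem_univ, true_and, mem_sdiff, c, Fin.ext_iff,
      G.mem_greedyChain_iff i.isLt.le, G.mem_greedyChain_iff i.isLt]
    omega
  have htele := G.innerDegreeSum_univ_add_sum_le r
  rw [G.greedyChain_eq_empty hG, ← Fin.sum_univ_eq_sum_range
    fun i => G.innerDegreeSum (G.greedyChain i \ G.greedyChain (i + 1))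
      + #(G.greedyChain i \ G.greedyChain (i + 1)) ^ 2] at htele
  simp only [← hfiber, sum_add_distrib, innerDegreeSum_univ, card_empty] at htele
  have hinner := G.two_mul_card_edgeFinset_sdiff_completeMultipartiteOf c
  have hparts := two_mul_card_edgeFinset_completeMultipartiteOf_add_sum_sq c
  have hempty : G.innerDegreeSum ∅ = 0 := rfl
  exact ⟨c, by omega⟩

section CliqueExtension

variable {V : Type*} [Fintype V] {r : ℕ} (G : SimpleGraph V) (c : V → Fin r) {f : V → ℝ}
  (hf : ∀ v j, c v ≠ j → (#{w | c w = j ∧ ¬G.Adj v w} : ℝ) ≤ f v)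
include hf

theorem exists_forall_adj_of_lt_card (S X : Finset V) {j : Fin r} (hS : ∀ w ∈ S, c w ≠ j)
    (h : #X + ∑ w ∈ S, f w < #{w | c w = j}) : ∃ x, c x = j ∧ x ∉ X ∧ ∀ w ∈ S, G.Adj w x := by
  by_contra! hno
  have hsub : ({x | c x = j} : Finset V) ⊆ X ∪ S.biUnion fun w => {x | c x = j ∧ ¬G.Adj w x} := by
    intro x hx
    rw [mem_filter] at hx
    by_cases hX : x ∈ X
    · exact mem_union_left _ hX
    · obtain ⟨w, hw, hnadj⟩ := hno x hx.2 hX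
      exact mem_union_right _ (mem_biUnion.mpr ⟨w, hw, by simp [hx.2, hnadj]⟩)
  have hcard : #{x | c x = j} ≤ #X + ∑ w ∈ S, #{x | c x = j ∧ ¬G.Adj w x} :=
    (card_le_card hsub).trans ((card_union_le _ _).trans (Nat.add_le_add_left card_biUnion_le _))
  have hmissing : ∑ w ∈ S, (#{x | c x = j ∧ ¬G.Adj w x} : ℝ) ≤ ∑ w ∈ S, f w :=
    sum_le_sum fun w hw => hf w j (hS w hw)
  have : (#{x | c x = j} : ℝ) ≤ #X + ∑ w ∈ S, (#{x | c x = j ∧ ¬G.Adj w x} : ℝ) := by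
    exact_mod_cast hcard
  linarith

theorem exists_isNClique_union {u v : V} (hadj : G.Adj u v) (huv : c u = c v) {θ θ' : ℝ}
    (hθ' : 0 ≤ θ') (hpart : ∀ j, #{w | θ' ≤ f w} + 2 * θ + (r - 2) * θ' < #{w | c w = j})
    (hu : f u < θ) (hv : f v < θ) (J : Finset (Fin r)) (hJ : J ⊆ univ.erase (c u)) :
    ∃ W : Finset V, #W = #J ∧ (∀ w ∈ W, c w ∈ J ∧ f w < θ') ∧
      G.IsNClique (#J + 2) ({u, v} ∪ W) := by
  induction J using Finset.induction_on with
  | empty =>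
    exact ⟨∅, rfl, by simp, by simpa [isNClique_iff, card_pair hadj.ne] using fun _ => hadj⟩
  | insert j J hj ih =>
    obtain ⟨W, hWcard, hWJ, hW⟩ := ih ((subset_insert _ _).trans hJ)
    have hcu : ∀ w ∈ ({u, v} : Finset V), c w = c u := by simp [huv]
    have hju : c u ≠ j := (ne_of_mem_erase (hJ (mem_insert_self j J))).symm
    have hcolor : ∀ w ∈ {u, v} ∪ W, c w ≠ j := fun w hw => by
      rcases mem_union.mp hw with hw | hw
      · exact hcu w hw ▸ hju
      · exact fun h => hj (h ▸ (hWJ w hw).1)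
    have hdisj : Disjoint {u, v} W := Finset.disjoint_left.mpr fun {w} hw hwW =>
      notMem_erase (c u) univ (hJ (mem_insert_of_mem (hcu w hw ▸ (hWJ w hwW).1)))
    have hJr : (#J : ℝ) ≤ r - 2 := by
      have := card_le_card hJ
      rw [card_insert_of_notMem hj, card_erase_of_mem (mem_univ _), card_univ,
        Fintype.card_fin] at this
      rw [le_sub_iff_add_le]
      exact_mod_cast (by omega : #J + 2 ≤ r)
    have hWsum : ∑ w ∈ W, f w ≤ (r - 2) * θ' := by
      calc ∑ w ∈ W, f w ≤ #W • θ' := sum_le_card_nsmul _ _ _ fun w hw => (hWJ w hw).2.le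
        _ ≤ (r - 2) * θ' := by
          rw [nsmul_eq_mul, hWcard]
          exact mul_le_mul_of_nonneg_right hJr hθ'
    obtain ⟨x, hxj, hxθ', hxadj⟩ := exists_forall_adj_of_lt_card G c hf ({u, v} ∪ W)
      {w | θ' ≤ f w} hcolor (by rw [sum_union hdisj, sum_pair hadj.ne]; linarith [hpart j])
    have hxW : x ∉ W := fun hx => hj (hxj ▸ (hWJ x hx).1)
    refine ⟨insert x W, by rw [card_insert_of_notMem hxW, hWcard, card_insert_of_notMem hj],
      fun w hw => ?_, ?_⟩
    · rcases mem_insert.mp hw with rfl | hw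
      · exact ⟨hxj ▸ mem_insert_self _ _, by simpa using hxθ'⟩
      · exact ⟨mem_insert_of_mem (hWJ w hw).1, (hWJ w hw).2⟩
    · rw [union_insert, card_insert_of_notMem hj]
      exact hW.insert fun b hb => (hxadj b hb).symm

theorem colorable_induce_compl (hG : G.CliqueFree (r + 1)) {θ θ' : ℝ} (hθ' : 0 ≤ θ')
    (hpart : ∀ j, #{w | θ' ≤ f w} + 2 * θ + (r - 2) * θ' < #{w | c w = j}) :
    (G.induce (↑({w | θ ≤ f w} : Finset V))ᶜ).Colorable r := by
  refine ⟨Coloring.mk (fun x => c x) fun {u v} hadj huv => ?_⟩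
  obtain ⟨W, -, -, hW⟩ := exists_isNClique_union G c hf hadj huv hθ' hpart
    (by simpa using u.2) (by simpa using v.2) _ subset_rfl
  rw [card_erase_of_mem (mem_univ _), card_univ, Fintype.card_fin] at hW
  exact hG _ (by convert hW using 1; have := (c u).pos; omega)

end CliqueExtension

theorem card_filter_not_adj_le_degree {V : Type*} [Fintype V] {r : ℕ} (G : SimpleGraph V)
    (c : V → Fin r) (v : V) (j : Fin r) (hj : c v ≠ j) :
    (#{w | c w = j ∧ ¬G.Adj v w} : ℝ) ≤ (completeMultipartiteOf c \ G).degree v := by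
  rw [← card_neighborFinset_eq_degree, neighborFinset_eq_filter]
  refine Nat.cast_le.mpr (card_le_card fun w hw => ?_)
  simp only [mem_filter, mem_univ, true_and] at hw ⊢
  exact ⟨by simpa [hw.1] using hj, hw.2⟩

section Stability

variable {V : Type*} [Fintype V] {G : SimpleGraph V} {r : ℕ}

theorem card_edgeFinset_sdiff_add_two_mul_le {c : V → Fin r}
    (hc : #G.edgeFinset + #(G \ completeMultipartiteOf c).edgeFinset
      ≤ #(completeMultipartiteOf c).edgeFinset) :
    #(completeMultipartiteOf c \ G).edgeFinset + 2 * #G.edgeFinset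
      ≤ 2 * turanEdges r (Fintype.card V) := by
  have := card_edgeFinset_sdiff_add_card G (completeMultipartiteOf c)
  have := card_edgeFinset_completeMultipartiteOf_le c
  omega

theorem sq_card_fiber_sub_le (hr : 0 < r) {c : V → Fin r}
    (hGc : #G.edgeFinset ≤ #(completeMultipartiteOf c).edgeFinset) (j : Fin r) :
    ((#{v | c v = j} : ℝ) - Fintype.card V / r) ^ 2
      ≤ r / 4 + 2 * ((turanEdges r (Fintype.card V) : ℝ) - #G.edgeFinset) := by
  have hdev := sq_sub_average_le (fun j => (#{v | c v = j} : ℝ)) j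
  have hid := two_mul_card_edgeFinset_completeMultipartiteOf_add_sum_sq c
  have hsum := sum_card_fiber_eq_card c
  rw [← Nat.cast_inj (R := ℝ)] at hid hsum
  push_cast at hid hsum hdev
  rw [hsum, Fintype.card_fin] at hdev
  have := sq_sub_two_mul_turanEdges_le hr (Fintype.card V)
  have : (#G.edgeFinset : ℝ) ≤ #(completeMultipartiteOf c).edgeFinset := by exact_mod_cast hGc
  linarith

theorem exists_colorable_induce_compl {n : ℕ} (hr : 2 ≤ r) (hn : Fintype.card V = n)
    (hG : G.CliqueFree (r + 1)) (c : V → Fin r)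
    (hc : #G.edgeFinset + #(G \ completeMultipartiteOf c).edgeFinset
      ≤ #(completeMultipartiteOf c).edgeFinset)
    {ε : ℝ} (hε : 30 * r ^ 3 * ε ≤ 1) (hεn : 1 ≤ ε * n ^ 2)
    (hedge : (turanEdges r n : ℝ) - ε * n ^ 2 ≤ #G.edgeFinset) :
    ∃ T : Finset V, (#T : ℝ) ≤ 80 * r * ε * n ∧ (G.induce (↑T)ᶜ).Colorable r := by
  have hmissing : (#(completeMultipartiteOf c \ G).edgeFinset : ℝ) ≤ 2 * ε * n ^ 2 := by
    have := card_edgeFinset_sdiff_add_two_mul_le hc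
    rw [hn] at this
    have : (#(completeMultipartiteOf c \ G).edgeFinset + 2 * #G.edgeFinset : ℝ)
        ≤ 2 * turanEdges r n := by exact_mod_cast this
    linarith
  have hdev (j : Fin r) : ((#{v | c v = j} : ℝ) - n / r) ^ 2 ≤ r / 4 + 2 * ε * n ^ 2 := by
    have := sq_card_fiber_sub_le (by omega) (le_of_add_le_left hc) j
    rw [hn] at this
    linarith
  have hn0 : (0 : ℝ) < n :=
    (Nat.cast_nonneg n).lt_of_ne (by rintro h; rw [← h] at hεn; norm_num at hεn)
  have hn30 : 30 * (r : ℝ) ^ 3 ≤ n ^ 2 := by nlinarith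
  have hmarkov (θ : ℝ) (hθ : 0 < θ) :
      (#{v | θ ≤ ((completeMultipartiteOf c \ G).degree v : ℝ)} : ℝ) ≤ 4 * ε * n ^ 2 / θ := by
    refine (card_filter_le_sum_div (fun v => Nat.cast_nonneg _) hθ).trans
      (div_le_div_of_nonneg_right ?_ hθ.le)
    have : ∑ v, (completeMultipartiteOf c \ G).degree v
        = 2 * #(completeMultipartiteOf c \ G).edgeFinset := by
      convert (completeMultipartiteOf c \ G).sum_degrees_eq_twice_card_edges
    rw [← Nat.cast_sum, this]
    push_cast
    linarith
  have hpart (j : Fin r) :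
      (#{v | 4 * n / (11 * r ^ 2) ≤ ((completeMultipartiteOf c \ G).degree v : ℝ)} : ℝ)
        + 2 * (n / (20 * r)) + (r - 2) * (4 * n / (11 * r ^ 2)) < #{v | c v = j} :=
    add_thresholds_lt_of_sq_sub_le (by exact_mod_cast hr) hn0 hn30 hε (hdev j)
      ((hmarkov _ (by positivity)).trans_eq (by field_simp))
  exact ⟨_, (hmarkov (n / (20 * r)) (by positivity)).trans_eq (by field_simp; ring),
    G.colorable_induce_compl c (card_filter_not_adj_le_degree G c) hG (by positivity) hpart⟩

theorem le_completeMultipartiteOf_of_turanEdges_le (c : V → Fin r)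
    (hc : #G.edgeFinset + #(G \ completeMultipartiteOf c).edgeFinset
      ≤ #(completeMultipartiteOf c).edgeFinset)
    (hG : turanEdges r (Fintype.card V) ≤ #G.edgeFinset) : G ≤ completeMultipartiteOf c := by
  have := card_edgeFinset_completeMultipartiteOf_le c
  have h : #(G \ completeMultipartiteOf c).edgeFinset = 0 := by omega
  rwa [card_eq_zero, edgeFinset_eq_empty, sdiff_eq_bot_iff] at h

end Stability

end SimpleGraph

/-- Lemma 1. For every `r ≥ 2` there is a constant `d_r` such that: if
`n ≥ 4r`, `0 ≤ ε ≤ 1/(30r³)` and `G` is an `n`-vertex `K_{r+1}`-free graph with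
`e(G) ≥ t_r(n) - εn²`, then there is `T ⊆ V(G)` with `|T| ≤ d_r ε n` and `G - T` `r`-partite. -/
theorem almost_partite_lemma (r : ℕ) (hr : 2 ≤ r) :
    ∃ d : ℝ, 0 < d ∧
      ∀ (V : Type) [Fintype V], ∀ (G : SimpleGraph V) (n : ℕ) (ε : ℝ),
        Fintype.card V = n → 4 * r ≤ n → 0 ≤ ε → ε ≤ 1 / (30 * (r : ℝ) ^ 3) →
        G.CliqueFree (r + 1) →
        (turanEdges r n : ℝ) - ε * (n : ℝ) ^ 2 ≤ (G.edgeFinset.card : ℝ) →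
        ∃ T : Finset V, (T.card : ℝ) ≤ d * ε * n ∧
          (G.induce ((↑T : Set V)ᶜ)).Colorable r := by
  refine ⟨80 * r, by positivity, fun V _ G n ε hn _ hε0 hε hG hedge => ?_⟩
  obtain ⟨c, hc⟩ := hG.exists_card_edgeFinset_add_le
  rcases lt_or_ge (ε * n ^ 2) 1 with hsmall | hlarge
  · -- the edge count is an integer, so `G` has at least `t_r(n)` edges
    have hle : turanEdges r (Fintype.card V) ≤ #G.edgeFinset := by
      rw [hn, ← Nat.lt_add_one_iff]
      exact_mod_cast (show (turanEdges r n : ℝ) < #G.edgeFinset + 1 by linarith)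
    refine ⟨∅, by simp only [card_empty, Nat.cast_zero]; positivity, ?_⟩
    exact ((colorable_completeMultipartiteOf c).mono_left
      (le_completeMultipartiteOf_of_turanEdges_le c hc hle)).of_hom (Embedding.induce _).toHom
  · refine exists_colorable_induce_compl hr hn hG c hc ?_ hlarge hedge
    rwa [le_div_iff₀' (by positivity)] at hε
end

section
/- Let r ≥ 2 and let G be a K_r-free, r-partite graph with vertex classes A, B, X₁, …, X_{r-2}. Then there is a set R ⊆ A ∪ B covering all r-saturating (A,B) edges of G such that the number of edges of the r-partite complement of G covered by R is at least c_r·|R|^{r/(r-1)}, for some constant c_r > 0 depending only on r. -/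
open SimpleGraph Finset
open scoped Classical

/-- The number of edges of the `r`-partite complement of `G` (non-edges of `G` joining two
distinct vertex classes of the partition `P`) that are covered by the set `R`. -/
noncomputable def coveredNonedges {V : Type} [Fintype V] [DecidableEq V]
    (G : SimpleGraph V) {r : ℕ} (P : Fin r → Finset V) (R : Finset V) : ℕ :=
  (Finset.univ.filter fun e : Sym2 V =>
    ∃ a b : V, e = s(a, b) ∧ ¬ G.Adj a b ∧
      (∃ i j : Fin r, i ≠ j ∧ a ∈ P i ∧ b ∈ P j) ∧ (a ∈ R ∨ b ∈ R)).card

/-!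
Write `d(v)` for the degree of `v` in `G̃`. Key estimate: let `W ⊆ A ∪ B` be such that every
`w ∈ W` has a partner `w' ∈ W` for which `w w'` is an `r`-saturating edge of `G̃`, and let
`d ≤ D` on `W`; then `|W| ≤ 2(r-1) D^(r-1)`. Fix `w₀ ∈ W`. If `w₀` is joined to the whole
witness clique of `w`, then `K_r`-freeness makes `w` a `G̃`-neighbour of `w₀`, or of the
`G̃`-neighbour `w'` of `w₀`. Otherwise some vertex `x` of that clique is a `G̃`-neighbour of
`w₀`, and such `w` lie in the neighbourhood of `x`, where the estimate holds with `r - 1`.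

Build `R` greedily, each time adding the vertex of maximal degree among the endpoints of the
uncovered saturating edges. Once a vertex with `2(r-1) d^(r-1) ≤ m` is added, all later ones
lie among the current at most `m` endpoints; so at most `m` vertices of `R` satisfy
`2(r-1) d^(r-1) ≤ m`. With `m = |R|/2`, half of `R` has `d ≥ (|R|/4(r-1))^(1/(r-1))`, and
`∑_{v ∈ R} d(v)` counts each edge of `G̃` covered by `R` at most twice.
-/

section Greedy

variable {V : Type*} [Fintype V] [DecidableEq V]

noncomputable def uncoveredEnds (S : V → V → Prop) (R : Finset V) : Finset V :=
  {v | v ∉ R ∧ ∃ u ∉ R, S v u ∨ S u v}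

lemma mem_uncoveredEnds {S : V → V → Prop} {R : Finset V} {v : V} :
    v ∈ uncoveredEnds S R ↔ v ∉ R ∧ ∃ u ∉ R, S v u ∨ S u v := by
  simp [uncoveredEnds]

lemma uncoveredEnds_anti {S : V → V → Prop} {R R' : Finset V} (h : R ⊆ R') :
    uncoveredEnds S R' ⊆ uncoveredEnds S R := fun v hv => by
  obtain ⟨hvR, u, huR, hvu⟩ := mem_uncoveredEnds.1 hv
  exact mem_uncoveredEnds.2 ⟨fun h' => hvR (h h'), u, fun h' => huR (h h'), hvu⟩

theorem exists_cover_card_filter_le (S : V → V → Prop) (f : V → ℕ)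
    (hf : ∀ R₀, (uncoveredEnds S R₀).Nonempty →
      ∃ w ∈ uncoveredEnds S R₀, #(uncoveredEnds S R₀) ≤ f w)
    (R₀ : Finset V) :
    ∃ R ⊆ uncoveredEnds S R₀, (∀ a b, S a b → a ∈ R₀ ∪ R ∨ b ∈ R₀ ∪ R) ∧
      ∀ m, #{v ∈ R | f v ≤ m} ≤ m := by
  by_cases hW : (uncoveredEnds S R₀).Nonempty
  · obtain ⟨w, hw, hWw⟩ := hf R₀ hW
    obtain ⟨R, hRW, hcov, hcount⟩ := exists_cover_card_filter_le S f hf (insert w R₀)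
    have hsub : insert w R ⊆ uncoveredEnds S R₀ :=
      insert_subset hw (hRW.trans (uncoveredEnds_anti (subset_insert w R₀)))
    refine ⟨insert w R, hsub, fun a b hab => ?_, fun m => ?_⟩
    · rw [union_insert, ← insert_union]
      exact hcov a b hab
    · by_cases hwm : f w ≤ m
      · exact (card_le_card (filter_subset _ _)).trans
          ((card_le_card hsub).trans (hWw.trans hwm))
      · rw [filter_insert, if_neg hwm]
        exact hcount m
  · refine ⟨∅, empty_subset _, fun a b hab => ?_, by simp⟩
    by_contra! h
    simp only [union_empty] at h
    exact hW ⟨a, mem_uncoveredEnds.2 ⟨h.1, b, h.2, Or.inl hab⟩⟩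
termination_by #R₀ᶜ
decreasing_by
  rw [compl_insert]
  exact card_erase_lt_of_mem (mem_compl.2 (mem_uncoveredEnds.1 hw).1)

end Greedy

lemma rpow_inv_div_le_of_le_mul_pow {T d n : ℕ} (hn : n ≠ 0) (h : T ≤ 2 * (2 * n * d ^ n)) :
    (T : ℝ) ^ (n⁻¹ : ℝ) / (4 * n) ≤ d := by
  have h4n : (4 * n : ℝ) ≤ (4 * n) ^ n := le_self_pow₀ (by norm_cast; omega) hn
  rw [← pow_le_pow_iff_left₀ (by positivity) (by positivity) hn, div_pow,
    Real.rpow_inv_natCast_pow (by positivity) hn, div_le_iff₀ (by positivity)]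
  calc (T : ℝ) ≤ d ^ n * (4 * n) := by
        rw [mul_comm]; exact_mod_cast (by linarith : T ≤ 4 * n * d ^ n)
    _ ≤ d ^ n * (4 * n) ^ n := by gcongr

theorem card_rpow_le_sum {V : Type*} {R : Finset V} {n : ℕ} (hn : n ≠ 0) (d : V → ℕ)
    (hcount : ∀ m, #{v ∈ R | 2 * n * d v ^ n ≤ m} ≤ m) :
    (#R : ℝ) ^ (1 + (n : ℝ)⁻¹) ≤ 8 * n * ∑ v ∈ R, (d v : ℝ) := by
  set L := {v ∈ R | ¬2 * n * d v ^ n ≤ #R / 2}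
  have hL : #R ≤ 2 * #L := by
    have h₁ : #{v ∈ R | 2 * n * d v ^ n ≤ #R / 2} + #L = #R :=
      card_filter_add_card_filter_not _
    have h₂ := hcount (#R / 2)
    omega
  have hd : ∀ v ∈ L, (#R : ℝ) ^ (n⁻¹ : ℝ) / (4 * n) ≤ d v := fun v hv =>
    rpow_inv_div_le_of_le_mul_pow hn (by have := (mem_filter.1 hv).2; omega)
  calc (#R : ℝ) ^ (1 + (n : ℝ)⁻¹) = #R * (#R : ℝ) ^ (n⁻¹ : ℝ) := by
        rw [Real.rpow_add' (by positivity) (by positivity), Real.rpow_one]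
    _ ≤ 2 * #L * (#R : ℝ) ^ (n⁻¹ : ℝ) := by gcongr; exact_mod_cast hL
    _ = 8 * n * (#L • ((#R : ℝ) ^ (n⁻¹ : ℝ) / (4 * n))) := by
        rw [nsmul_eq_mul]; field_simp; ring
    _ ≤ 8 * n * ∑ v ∈ L, (d v : ℝ) := by gcongr; exact card_nsmul_le_sum _ _ _ hd
    _ ≤ 8 * n * ∑ v ∈ R, (d v : ℝ) := by
        gcongr
        exact filter_subset _ _

namespace SimpleGraph

variable {V ι : Type*}

/-- `G̃` in the paper, for the partition of `V` into the colour classes of `c`. -/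
def partiteCompl (G : SimpleGraph V) (c : V → ι) : SimpleGraph V where
  Adj u v := c u ≠ c v ∧ ¬G.Adj u v
  symm := ⟨fun _ _ h => ⟨h.1.symm, fun h' => h.2 h'.symm⟩⟩
  loopless := ⟨fun _ h => h.1 rfl⟩

/-- Adding the edge `w w'` of `G̃` to `G` completes `K ⊆ U` to a `(k + 2)`-clique. -/
def IsSaturationWitness (G : SimpleGraph V) (c : V → ι) (U : Finset V) (k : ℕ) (w w' : V)
    (K : Finset V) : Prop :=
  (G.partiteCompl c).Adj w w' ∧ K ⊆ U ∧ G.IsNClique k K ∧ ∀ x ∈ K, G.Adj w x ∧ G.Adj w' x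

variable {G : SimpleGraph V} {c : V → ι}

lemma IsSaturationWitness.symm {U : Finset V} {k : ℕ} {w w' : V} {K : Finset V}
    (h : G.IsSaturationWitness c U k w w' K) : G.IsSaturationWitness c U k w' w K :=
  ⟨h.1.symm, h.2.1, h.2.2.1, fun x hx => (h.2.2.2 x hx).symm⟩

lemma IsSaturationWitness.erase [DecidableEq V] {U : Finset V} {k : ℕ} {w w' x : V}
    {K : Finset V}    (h : G.IsSaturationWitness c U (k + 1) w w' K) (hx : x ∈ K) :
    G.IsSaturationWitness c {y ∈ U | G.Adj x y} k w w' (K.erase x) := by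
  obtain ⟨hww', hKU, hK, hadj⟩ := h
  refine ⟨hww', fun y hy => ?_, hK.erase_of_mem hx, fun y hy => hadj y (mem_of_mem_erase hy)⟩
  obtain ⟨hyx, hyK⟩ := mem_erase.1 hy
  exact mem_filter.2 ⟨hKU hyK, hK.isClique hx hyK (Ne.symm hyx)⟩

lemma IsSaturationWitness.color_ne (hc : ∀ u v, G.Adj u v → c u ≠ c v) {U : Finset V} {k : ℕ}
    {w w' x u : V} {K : Finset V} {α β : ι} (h : G.IsSaturationWitness c U k w w' K)
    (hx : x ∈ K) (hw : c w = α ∨ c w = β) (hw' : c w' = α ∨ c w' = β)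
    (hu : c u = α ∨ c u = β) :
    c x ≠ c u := by
  have := hc _ _ (h.2.2.2 x hx).1
  have := hc _ _ (h.2.2.2 x hx).2
  have := h.1.1
  grind

lemma not_adj_of_forall_adj_isNClique [DecidableEq V] {U t : Finset V} {n : ℕ} {u v : V}
    (hfree : ∀ s ⊆ U, ¬G.IsNClique (n + 2) s) (ht : G.IsNClique n t) (htU : t ⊆ U)
    (hu : u ∈ U) (hv : v ∈ U) (hut : ∀ x ∈ t, G.Adj u x) (hvt : ∀ x ∈ t, G.Adj v x) :
    ¬G.Adj u v := fun huv =>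
  hfree _ (insert_subset hu (insert_subset hv htU))
    ((ht.insert hvt).insert (forall_mem_insert _ _ _ |>.2 ⟨huv, hut⟩))

lemma exists_isNClique_of_not_cliqueFree_sup_edge [DecidableEq V] {k : ℕ} {a b : V}
    (h : G.CliqueFree (k + 2)) (h' : ¬(G ⊔ edge a b).CliqueFree (k + 2)) :
    ∃ K : Finset V, G.IsNClique k K ∧ ∀ x ∈ K, G.Adj a x ∧ G.Adj b x := by
  obtain ⟨t, ht⟩ := not_forall_not.1 h'
  have ha := h.mem_of_sup_edge_isNClique ht
  have hb := h.mem_of_sup_edge_isNClique (edge_comm .. ▸ ht)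
  have hab : a ≠ b := by
    rintro rfl
    rw [edge_self_eq_bot, sup_bot_eq] at ht
    exact h t ht
  have hta := (edge_comm .. ▸ ht).erase_of_sup_edge_of_mem hb
  have htb := ht.erase_of_sup_edge_of_mem ha
  refine ⟨(t.erase a).erase b, htb.erase_of_mem (mem_erase.2 ⟨hab.symm, hb⟩), fun x hx => ?_⟩
  obtain ⟨hxb, hxa, hxt⟩ : x ≠ b ∧ x ≠ a ∧ x ∈ t := by simpa using hx
  exact ⟨hta.isClique (mem_erase.2 ⟨hab, ha⟩) (mem_erase.2 ⟨hxb, hxt⟩) (Ne.symm hxa),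
    htb.isClique (mem_erase.2 ⟨hab.symm, hb⟩) (mem_erase.2 ⟨hxa, hxt⟩) (Ne.symm hxb)⟩

lemma not_isNClique_of_subset_filter_adj [DecidableEq V] {U : Finset V} {n : ℕ} {x : V}
    (hx : x ∈ U) (hfree : ∀ t ⊆ U, ¬G.IsNClique (n + 1) t) :
    ∀ t ⊆ {y ∈ U | G.Adj x y}, ¬G.IsNClique n t := fun _ ht htc =>
  hfree _ (insert_subset hx fun _ hy => (mem_filter.1 (ht hy)).1)
    (htc.insert fun _ hy => (mem_filter.1 (ht hy)).2)

section Degree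

variable [Fintype V] [DecidableEq V]

lemma card_le_of_forall_partiteCompl_adj {U W : Finset V} {d : ℕ}
    (hfree : ∀ t ⊆ U, ¬G.IsNClique 2 t) (hWU : W ⊆ U)
    (hpartner : ∀ w ∈ W, ∃ w' ∈ W, (G.partiteCompl c).Adj w w')
    (hdeg : ∀ w ∈ W, (G.partiteCompl c).degree w ≤ d) :
    #W ≤ 2 * d := by
  rcases W.eq_empty_or_nonempty with rfl | ⟨w₀, hw₀⟩
  · simp
  obtain ⟨w₁, hw₁, h₀₁⟩ := hpartner w₀ hw₀
  have hnadj : ∀ u ∈ W, ∀ v ∈ W, ¬G.Adj u v := fun u hu v hv =>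
    not_adj_of_forall_adj_isNClique (n := 0) hfree (isNClique_empty.2 rfl) (empty_subset U)
      (hWU hu) (hWU hv) (by simp) (by simp)
  have hcover :
      W ⊆ (G.partiteCompl c).neighborFinset w₀ ∪ (G.partiteCompl c).neighborFinset w₁ := by
    intro w hw
    simp only [mem_union, mem_neighborFinset]
    by_cases h : c w₀ = c w
    · exact Or.inr ⟨h ▸ h₀₁.1.symm, hnadj w₁ hw₁ w hw⟩
    · exact Or.inl ⟨h, hnadj w₀ hw₀ w hw⟩
  calc #W ≤ (G.partiteCompl c).degree w₀ + (G.partiteCompl c).degree w₁ := by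
        simpa using (card_le_card hcover).trans (card_union_le _ _)
    _ ≤ 2 * d := by linarith [hdeg w₀ hw₀, hdeg w₁ hw₁]

noncomputable def witnessesThrough (G : SimpleGraph V) (c : V → ι) (U W : Finset V) (k : ℕ)
    (x : V) : Finset V :=
  {w ∈ W | ∃ w' ∈ W, ∃ K, G.IsSaturationWitness c U k w w' K ∧ x ∈ K}

lemma witnessesThrough_subset_filter_adj {U W : Finset V} {k : ℕ} {x : V} (hWU : W ⊆ U) :
    G.witnessesThrough c U W k x ⊆ {y ∈ U | G.Adj x y} := fun w hw => by
  obtain ⟨hw, _, _, K, hK, hxK⟩ := mem_filter.1 hw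
  exact mem_filter.2 ⟨hWU hw, ((hK.2.2.2 x hxK).1).symm⟩

lemma exists_saturationWitness_of_mem_witnessesThrough {U W : Finset V} {k : ℕ} {x w : V}
    (hw : w ∈ G.witnessesThrough c U W (k + 1) x) :
    ∃ w' ∈ G.witnessesThrough c U W (k + 1) x, ∃ K,
      G.IsSaturationWitness c {y ∈ U | G.Adj x y} k w w' K := by
  obtain ⟨hw, w', hw', K, hK, hxK⟩ := mem_filter.1 hw
  exact ⟨w', mem_filter.2 ⟨hw', w, hw, K, hK.symm, hxK⟩, K.erase x, hK.erase hxK⟩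

lemma subset_union_biUnion_witnessesThrough (hc : ∀ u v, G.Adj u v → c u ≠ c v)
    {U W : Finset V} {k : ℕ} {α β : ι} {w₀ : V}
    (hfree : ∀ t ⊆ U, ¬G.IsNClique (k + 3) t) (hWU : W ⊆ U)
    (hcol : ∀ w ∈ W, c w = α ∨ c w = β)
    (hpartner : ∀ w ∈ W, ∃ w' ∈ W, ∃ K, G.IsSaturationWitness c U (k + 1) w w' K)
    (hw₀ : w₀ ∈ W) :
    W ⊆ (G.partiteCompl c).neighborFinset w₀ ∪
        ((G.partiteCompl c).neighborFinset w₀ ∩ W).biUnion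
          (fun u => (G.partiteCompl c).neighborFinset u) ∪
        ((G.partiteCompl c).neighborFinset w₀ ∩ U).biUnion (G.witnessesThrough c U W (k + 1)) := by
  intro w hw
  obtain ⟨w', hw', K, hK⟩ := hpartner w hw
  simp only [mem_union, mem_biUnion, mem_inter, mem_neighborFinset]
  by_cases hK₀ : ∀ x ∈ K, G.Adj w₀ x
  · have hnadj : ∀ v ∈ W, (∀ x ∈ K, G.Adj v x) → ¬G.Adj w₀ v := fun v hv hvK =>
      not_adj_of_forall_adj_isNClique hfree hK.2.2.1 hK.2.1 (hWU hw₀) (hWU hv) hK₀ hvK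
    by_cases hcw : c w₀ = c w
    · refine Or.inl (Or.inr ⟨w', ⟨⟨hcw ▸ hK.1.1, ?_⟩, hw'⟩, hK.1.symm⟩)
      exact hnadj w' hw' fun x hx => (hK.2.2.2 x hx).2
    · exact Or.inl (Or.inl ⟨hcw, hnadj w hw fun x hx => (hK.2.2.2 x hx).1⟩)
  · obtain ⟨x, hxK, hx⟩ := not_forall₂.1 hK₀
    have hcx := hK.color_ne hc hxK (hcol w hw) (hcol w' hw') (hcol w₀ hw₀)
    exact Or.inr ⟨x, ⟨⟨hcx.symm, hx⟩, hK.2.1 hxK⟩, mem_filter.2 ⟨hw, w', hw', K, hK, hxK⟩⟩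

theorem card_le_of_forall_saturationWitness (hc : ∀ u v, G.Adj u v → c u ≠ c v) {α β : ι}
    {d : ℕ} (k : ℕ) {U W : Finset V} (hfree : ∀ t ⊆ U, ¬G.IsNClique (k + 2) t) (hWU : W ⊆ U)
    (hcol : ∀ w ∈ W, c w = α ∨ c w = β)
    (hpartner : ∀ w ∈ W, ∃ w' ∈ W, ∃ K, G.IsSaturationWitness c U k w w' K)
    (hdeg : ∀ w ∈ W, (G.partiteCompl c).degree w ≤ d) :
    #W ≤ 2 * (k + 1) * d ^ (k + 1) := by
  induction k generalizing U W with
  | zero =>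
    simpa using card_le_of_forall_partiteCompl_adj hfree hWU
      (fun w hw => (hpartner w hw).imp fun _ ⟨hw', _, hK⟩ => ⟨hw', hK.1⟩) hdeg
  | succ k ih =>
    rcases W.eq_empty_or_nonempty with rfl | ⟨w₀, hw₀⟩
    · simp
    have hN : #((G.partiteCompl c).neighborFinset w₀) ≤ d := by simpa using hdeg w₀ hw₀
    have hN' : ∀ s, #((G.partiteCompl c).neighborFinset w₀ ∩ s) ≤ d := fun _ =>
      (card_le_card inter_subset_left).trans hN
    have hWx : ∀ x ∈ (G.partiteCompl c).neighborFinset w₀ ∩ U,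
        #(G.witnessesThrough c U W (k + 1) x) ≤ 2 * (k + 1) * d ^ (k + 1) := fun x hx =>
      ih (not_isNClique_of_subset_filter_adj (mem_inter.1 hx).2 hfree)
        (witnessesThrough_subset_filter_adj hWU) (fun w hw => hcol w (mem_filter.1 hw).1)
        (fun _ hw => exists_saturationWitness_of_mem_witnessesThrough hw)
        (fun w hw => hdeg w (mem_filter.1 hw).1)
    calc #W ≤ #((G.partiteCompl c).neighborFinset w₀) +
          #(((G.partiteCompl c).neighborFinset w₀ ∩ W).biUnion
            fun u => (G.partiteCompl c).neighborFinset u) +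
          #(((G.partiteCompl c).neighborFinset w₀ ∩ U).biUnion
            (G.witnessesThrough c U W (k + 1))) :=
        (card_le_card
          (subset_union_biUnion_witnessesThrough hc hfree hWU hcol hpartner hw₀)).trans
          ((card_union_le _ _).trans (Nat.add_le_add_right (card_union_le _ _) _))
      _ ≤ d + d * d + d * (2 * (k + 1) * d ^ (k + 1)) := by
        gcongr
        · exact (card_biUnion_le_card_mul _ _ d fun u hu => by
            simpa using hdeg u (mem_inter.1 hu).2).trans (Nat.mul_le_mul_right d (hN' W))
        · exact (card_biUnion_le_card_mul _ _ _ hWx).trans (Nat.mul_le_mul_right _ (hN' U))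
      _ ≤ 2 * (k + 1 + 1) * d ^ (k + 1 + 1) := by
        have h₁ : d ≤ d ^ (k + 1 + 1) := Nat.le_self_pow (by omega) d
        have h₂ : d * d ≤ d ^ (k + 1 + 1) := by
          rw [pow_succ']; exact Nat.mul_le_mul_left d (Nat.le_self_pow (by omega) d)
        have e : 2 * (k + 1 + 1) * d ^ (k + 1 + 1) =
            d * (2 * (k + 1) * d ^ (k + 1)) + 2 * d ^ (k + 1 + 1) := by ring
        omega

theorem exists_card_uncoveredEnds_le (hc : ∀ u v, G.Adj u v → c u ≠ c v) {k : ℕ}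
    (hfree : G.CliqueFree (k + 2)) {α β : ι} {S : V → V → Prop}
    (hS : ∀ a b, S a b → c a = α ∧ c b = β ∧ ∃ K, G.IsSaturationWitness c univ k a b K)
    (R₀ : Finset V) (hne : (uncoveredEnds S R₀).Nonempty) :
    ∃ w ∈ uncoveredEnds S R₀,
      #(uncoveredEnds S R₀) ≤ 2 * (k + 1) * (G.partiteCompl c).degree w ^ (k + 1) := by
  obtain ⟨w, hw, hmax⟩ := exists_max_image _ (fun v => (G.partiteCompl c).degree v) hne
  refine ⟨w, hw, card_le_of_forall_saturationWitness hc (α := α) (β := β) k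
    (fun t _ => hfree t) (subset_univ _) (fun v hv => ?_) (fun v hv => ?_) hmax⟩
  · obtain ⟨-, _, -, huv | huv⟩ := mem_uncoveredEnds.1 hv
    exacts [Or.inl (hS _ _ huv).1, Or.inr (hS _ _ huv).2.1]
  · obtain ⟨hvR, u, huR, huv | huv⟩ := mem_uncoveredEnds.1 hv
    · exact ⟨u, mem_uncoveredEnds.2 ⟨huR, v, hvR, Or.inr huv⟩, (hS _ _ huv).2.2⟩
    · exact ⟨u, mem_uncoveredEnds.2 ⟨huR, v, hvR, Or.inl huv⟩,
        (hS _ _ huv).2.2.imp fun _ hK => hK.symm⟩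

end Degree

theorem sum_degree_le_two_mul_card_incident [Fintype V] [DecidableEq V] (H : SimpleGraph V)
    [DecidableRel H.Adj] (R : Finset V) :
    ∑ v ∈ R, H.degree v ≤ 2 * #{e ∈ H.edgeFinset | ∃ v ∈ R, v ∈ e} := by
  set t := {e ∈ H.edgeFinset | ∃ v ∈ R, v ∈ e}
  have habove : ∀ v ∈ R, #(t.bipartiteAbove (· ∈ ·) v) = H.degree v := fun v hv => by
    rw [← card_incidenceFinset_eq_degree]
    congr 1
    ext e
    simp only [bipartiteAbove, t, mem_filter, mem_incidenceFinset, incidenceSet, mem_edgeFinset,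
      Set.mem_ofPred_eq]
    exact ⟨fun h => ⟨h.1.1, h.2⟩, fun h => ⟨⟨h.1, v, hv, h.2⟩, h.2⟩⟩
  have hbelow : ∀ e ∈ t, #(R.bipartiteBelow (· ∈ ·) e) ≤ 2 := fun e _ =>
    calc #(R.bipartiteBelow (· ∈ ·) e) ≤ #e.toFinset :=
          card_le_card fun v hv => Sym2.mem_toFinset.2 (mem_filter.1 hv).2
      _ ≤ 2 := by rw [Sym2.card_toFinset]; split_ifs <;> omega
  calc ∑ v ∈ R, H.degree v = ∑ v ∈ R, #(t.bipartiteAbove (· ∈ ·) v) :=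
        (sum_congr rfl habove).symm
    _ = ∑ e ∈ t, #(R.bipartiteBelow (· ∈ ·) e) :=
        sum_card_bipartiteAbove_eq_sum_card_bipartiteBelow _
    _ ≤ 2 * #t := by rw [mul_comm, ← smul_eq_mul]; exact sum_le_card_nsmul _ _ _ hbelow

end SimpleGraph

lemma card_incident_partiteCompl_le_coveredNonedges {r : ℕ} {V : Type} [Fintype V]
    [DecidableEq V] {G : SimpleGraph V} (P : Fin r → Finset V) {c : V → Fin r}
    (hP : ∀ v, v ∈ P (c v)) (R : Finset V) :
    #{e ∈ (G.partiteCompl c).edgeFinset | ∃ v ∈ R, v ∈ e} ≤ coveredNonedges G P R := by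
  refine card_le_card fun e he => ?_
  obtain ⟨he, v, hvR, hve⟩ := mem_filter.1 he
  obtain ⟨u, rfl⟩ := Sym2.mem_iff_exists.1 hve
  have hvu : (G.partiteCompl c).Adj v u := by simpa using he
  exact mem_filter.2 ⟨mem_univ _, v, u, rfl, hvu.2, ⟨c v, c u, hvu.1, hP v, hP u⟩, Or.inl hvR⟩

lemma exists_coloring_of_partition {r : ℕ} {V : Type*} {G : SimpleGraph V}
    {P : Fin r → Finset V} (hpart : ∀ v, ∃! i, v ∈ P i)
    (hind : ∀ i, ∀ v ∈ P i, ∀ w ∈ P i, ¬G.Adj v w) :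
    ∃ c : V → Fin r, (∀ v i, v ∈ P i ↔ c v = i) ∧ ∀ u v, G.Adj u v → c u ≠ c v := by
  choose c hc huniq using hpart
  have hcP : ∀ v i, v ∈ P i ↔ c v = i := fun v i => ⟨fun h => (huniq v i h).symm, fun h => h ▸ hc v⟩
  exact ⟨c, hcP, fun u v huv h => hind _ u (hc u) v ((hcP v _).2 h.symm) huv⟩

theorem inv_mul_card_rpow_le_coveredNonedges {r : ℕ} {V : Type} [Fintype V] [DecidableEq V]
    {G : SimpleGraph V} (P : Fin r → Finset V) {c : V → Fin r} (hP : ∀ v, v ∈ P (c v))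
    {R : Finset V} {n : ℕ} (hn : n ≠ 0)
    (hcount : ∀ m, #{v ∈ R | 2 * n * (G.partiteCompl c).degree v ^ n ≤ m} ≤ m) :
    (16 * n : ℝ)⁻¹ * #R ^ (1 + (n : ℝ)⁻¹) ≤ coveredNonedges G P R := by
  have hsum := card_rpow_le_sum hn _ hcount
  have hdeg : (∑ v ∈ R, ((G.partiteCompl c).degree v : ℝ)) ≤ 2 * coveredNonedges G P R := by
    exact_mod_cast (sum_degree_le_two_mul_card_incident _ R).trans
      (Nat.mul_le_mul_left 2 (card_incident_partiteCompl_le_coveredNonedges P hP R))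
  have hn' : (0 : ℝ) < n := by positivity
  calc (16 * n : ℝ)⁻¹ * #R ^ (1 + (n : ℝ)⁻¹)
      ≤ (16 * n : ℝ)⁻¹ * (8 * n * ∑ v ∈ R, ((G.partiteCompl c).degree v : ℝ)) := by gcongr
    _ ≤ coveredNonedges G P R := by field_simp; linarith

/-- Lemma 2, Part 1. Let `r ≥ 2` and let `G` be a `K_r`-free `r`-partite
graph with vertex classes `A = P 0`, `B = P 1`, `X₁ = P 2, …`. Then there is `R ⊆ A ∪ B`
covering all `r`-saturating `(A,B)` edges with `|I_{G̃}(R)| ≥ c_r |R|^{r/(r-1)}`. -/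
theorem cover_saturating_edges (r : ℕ) (hr : 2 ≤ r) :
    ∃ c : ℝ, 0 < c ∧
      ∀ (V : Type) [Fintype V] [DecidableEq V],
        ∀ (G : SimpleGraph V) (P : Fin r → Finset V),
        (∀ v : V, ∃! i : Fin r, v ∈ P i) →
        (∀ i : Fin r, ∀ v ∈ P i, ∀ w ∈ P i, ¬ G.Adj v w) →
        G.CliqueFree r →
        ∃ R : Finset V, R ⊆ P ⟨0, by omega⟩ ∪ P ⟨1, by omega⟩ ∧
          (∀ a ∈ P ⟨0, by omega⟩, ∀ b ∈ P ⟨1, by omega⟩, ¬ G.Adj a b →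
            ¬ (G ⊔ SimpleGraph.fromEdgeSet {s(a, b)}).CliqueFree r → a ∈ R ∨ b ∈ R) ∧
          c * (R.card : ℝ) ^ ((r : ℝ) / ((r : ℝ) - 1)) ≤ (coveredNonedges G P R : ℝ) := by
  obtain ⟨k, rfl⟩ : ∃ k, r = k + 2 := ⟨r - 2, by omega⟩
  refine ⟨(16 * ((k + 1 : ℕ) : ℝ))⁻¹, by positivity, fun V _ _ G P hpart hind hfree => ?_⟩
  obtain ⟨c, hcP, hc⟩ := exists_coloring_of_partition hpart hind
  have hP : ∀ v, v ∈ P (c v) := fun v => (hcP v _).2 rfl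
  let S : V → V → Prop := fun a b => a ∈ P ⟨0, by omega⟩ ∧ b ∈ P ⟨1, by omega⟩ ∧ ¬G.Adj a b ∧
    ¬(G ⊔ fromEdgeSet {s(a, b)}).CliqueFree (k + 2)
  have hS : ∀ a b, S a b → c a = ⟨0, by omega⟩ ∧ c b = ⟨1, by omega⟩ ∧
      ∃ K, G.IsSaturationWitness c univ k a b K := by
    rintro a b ⟨ha, hb, hab, hsat⟩
    obtain ⟨K, hK, hadj⟩ := exists_isNClique_of_not_cliqueFree_sup_edge hfree hsat
    rw [hcP] at ha hb
    exact ⟨ha, hb, K, ⟨by simp [ha, hb], hab⟩, subset_univ K, hK, hadj⟩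
  obtain ⟨R, hRS, hcover, hcount⟩ :=
    exists_cover_card_filter_le S _ (exists_card_uncoveredEnds_le hc hfree hS) ∅
  refine ⟨R, fun v hv => ?_, fun a ha b hb hab hsat => by
    simpa using hcover a b ⟨ha, hb, hab, hsat⟩, ?_⟩
  · obtain ⟨-, _, -, h | h⟩ := mem_uncoveredEnds.1 (hRS hv)
    exacts [mem_union_left _ h.1, mem_union_right _ h.2.1]
  have h := inv_mul_card_rpow_le_coveredNonedges (n := k + 1) P hP (by omega) hcount
  rwa [Nat.cast_succ (k + 1), add_sub_cancel_right, add_div, div_self (by positivity), one_div]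
end

section
/- In the r-partite graph G_{r,s} (r, s ≥ 2) as defined in the paper, every independent set has at most |G_{r,s}| − 2s^{r-1} vertices. -/
open SimpleGraph Finset

/-- The vertex type of the `r`-partite graph `G_{r, s₁, …, s_{r-1}}` of the paper, at
"level" `k` (corresponding to `r = k + 2` vertex classes): the base graph `G_{2,s₁}` is
`K_{s₁,s₁}`, and `G_{t+1}` consists of `s_t` disjoint copies of `G_t` together with a new
class of `s_t` vertices. -/
def GVert (s : ℕ → ℕ) : ℕ → Type
  | 0 => Fin (s 1) ⊕ Fin (s 1)
  | k + 1 => (Fin (s (k + 2)) × GVert s k) ⊕ Fin (s (k + 2))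

instance GVert.fintype (s : ℕ → ℕ) : ∀ k : ℕ, Fintype (GVert s k)
  | 0 => inferInstanceAs (Fintype (Fin (s 1) ⊕ Fin (s 1)))
  | k + 1 =>
    letI := GVert.fintype s k
    inferInstanceAs (Fintype ((Fin (s (k + 2)) × GVert s k) ⊕ Fin (s (k + 2))))

/-- One-sided adjacency for `G_{r, s₁, …, s_{r-1}}`: in the base case `K_{s₁,s₁}` all pairs
across the bipartition are joined; at level `k+1`, edges inside the `p`-th copy `H_p` are
those of `G_t`, and the new vertex `x_p` is joined to all of `H_q` for `q ≠ p`. -/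
def GAdj (s : ℕ → ℕ) : (k : ℕ) → GVert s k → GVert s k → Prop
  | 0, Sum.inl _, Sum.inr _ => True
  | 0, _, _ => False
  | k + 1, Sum.inl (p, v), Sum.inl (q, w) => p = q ∧ GAdj s k v w
  | k + 1, Sum.inl (q, _), Sum.inr p => p ≠ q
  | k + 1, _, _ => False

/-- The graph `G_{r, s₁, …, s_{r-1}}` (at level `k = r - 2`), as a simple graph. -/
def GGraph (s : ℕ → ℕ) (k : ℕ) : SimpleGraph (GVert s k) where
  Adj v w := v ≠ w ∧ (GAdj s k v w ∨ GAdj s k w v)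
  symm := ⟨fun v w h => ⟨h.1.symm, h.2.symm⟩⟩
  loopless := ⟨fun v h => h.1 rfl⟩


/-!
Induction on the number of classes proves `|I| + s₁ s₂ ⋯ s_{k+1} ≤ |G_k|` for every independent
set `I` and arbitrary class sizes. An independent set of `G_{k+1}` either avoids the new class,
and then meets each of the `s_{k+2}` copies of `G_k` in an independent set, or contains a new
vertex `x_p`; then it avoids every copy `H_q` with `q ≠ p`, and it meets `H_p` only if `x_p` is
its only new vertex.
-/

theorem SimpleGraph.IsIndepSet.preimage {V W : Type*} {G : SimpleGraph V} {H : SimpleGraph W}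
    (f : G ↪g H) {t : Set W} (ht : H.IsIndepSet t) : G.IsIndepSet (f ⁻¹' t) :=
  fun _ hv _ hw hne hadj => ht hv hw (f.injective.ne hne) (f.map_adj_iff.2 hadj)

namespace GVert

variable {s : ℕ → ℕ} {k : ℕ}

theorem card_zero : Fintype.card (GVert s 0) = s 1 + s 1 := by
  show Fintype.card (Fin (s 1) ⊕ Fin (s 1)) = _
  simp

theorem card_succ :
    Fintype.card (GVert s (k + 1)) = s (k + 2) * Fintype.card (GVert s k) + s (k + 2) := by
  show Fintype.card ((Fin (s (k + 2)) × GVert s k) ⊕ Fin (s (k + 2))) = _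
  simp

end GVert

namespace GGraph

open GVert

variable {s : ℕ → ℕ} {k : ℕ}

theorem adj_inl_inr_zero (a b : Fin (s 1)) : (GGraph s 0).Adj (Sum.inl a) (Sum.inr b) :=
  ⟨Sum.inl_ne_inr, Or.inl trivial⟩

theorem adj_inl_inr_succ {p q : Fin (s (k + 2))} (hpq : p ≠ q) (v : GVert s k) :
    (GGraph s (k + 1)).Adj (Sum.inl (q, v)) (Sum.inr p) :=
  ⟨Sum.inl_ne_inr, Or.inl hpq⟩

def copyEmbedding (p : Fin (s (k + 2))) : GGraph s k ↪g GGraph s (k + 1) where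
  toFun v := Sum.inl (p, v)
  inj' _ _ h := congrArg Prod.snd (Sum.inl_injective h)
  map_rel_iff' {v w} := by
    show (Sum.inl (p, v) ≠ Sum.inl (p, w) ∧ ((p = p ∧ GAdj s k v w) ∨ (p = p ∧ GAdj s k w v)))
      ↔ v ≠ w ∧ (GAdj s k v w ∨ GAdj s k w v)
    simp

noncomputable def copy (I : Finset (GVert s (k + 1))) (p : Fin (s (k + 2))) : Finset (GVert s k) :=
  I.preimage (copyEmbedding p) (copyEmbedding p).injective.injOn

theorem isIndepSet_copy {I : Finset (GVert s (k + 1))} (hI : (GGraph s (k + 1)).IsIndepSet ↑I)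
    (p : Fin (s (k + 2))) : (GGraph s k).IsIndepSet ↑(copy I p) := by
  rw [copy, coe_preimage]
  exact hI.preimage _

theorem copy_eq_empty_of_inr_mem {I : Finset (GVert s (k + 1))}
    (hI : (GGraph s (k + 1)).IsIndepSet ↑I) {p q : Fin (s (k + 2))} (hp : Sum.inr p ∈ I)
    (hqp : q ≠ p) : copy I q = ∅ :=
  eq_empty_of_forall_notMem fun v hv =>
    hI (mem_preimage.1 hv) hp Sum.inl_ne_inr (adj_inl_inr_succ hqp.symm v)

theorem card_le_sum_card_copy_add_card_toRight (I : Finset (GVert s (k + 1))) :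
    #I ≤ ∑ p, #(copy I p) + #I.toRight := by
  classical
  refine card_toLeft_add_card_toRight.symm.le.trans (Nat.add_le_add_right ?_ _)
  calc #I.toLeft
      ≤ #(univ.biUnion fun p => (copy I p).map ⟨Prod.mk p, Prod.mk_right_injective p⟩) :=
        card_le_card fun x hx => mem_biUnion.2
          ⟨x.1, mem_univ _, mem_map.2 ⟨x.2, mem_preimage.2 (mem_toLeft.1 hx), rfl⟩⟩
    _ ≤ ∑ p, #(copy I p) := card_biUnion_le.trans_eq (by simp)

theorem card_add_le_of_isIndepSet_zero {I : Finset (GVert s 0)}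
    (hI : (GGraph s 0).IsIndepSet ↑I) : #I + s 1 ≤ Fintype.card (GVert s 0) := by
  have hside : I.toLeft = ∅ ∨ I.toRight = ∅ := by
    by_contra! h
    obtain ⟨⟨a, ha⟩, ⟨b, hb⟩⟩ := h
    exact hI (mem_toLeft.1 ha) (mem_toRight.1 hb) Sum.inl_ne_inr (adj_inl_inr_zero a b)
  have hL : #I.toLeft ≤ s 1 := (card_le_univ _).trans_eq (Fintype.card_fin _)
  have hR : #I.toRight ≤ s 1 := (card_le_univ _).trans_eq (Fintype.card_fin _)
  have hsplit : #I.toLeft + #I.toRight = #I := card_toLeft_add_card_toRight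
  rw [card_zero]
  rcases hside with h | h <;> rw [h, card_empty] at hsplit <;> omega

theorem card_add_mul_le_of_isIndepSet_succ {m : ℕ}
    (ih : ∀ J : Finset (GVert s k), (GGraph s k).IsIndepSet ↑J → #J + m ≤ Fintype.card (GVert s k))
    {I : Finset (GVert s (k + 1))} (hI : (GGraph s (k + 1)).IsIndepSet ↑I) :
    #I + s (k + 2) * m ≤ Fintype.card (GVert s (k + 1)) := by
  have hcopy p := ih _ (isIndepSet_copy hI p)
  have hcover := card_le_sum_card_copy_add_card_toRight I
  rw [card_succ]
  obtain hB | ⟨p, hp⟩ := I.toRight.eq_empty_or_nonempty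
  · have hsum : ∑ p, #(copy I p) + s (k + 2) * m ≤ s (k + 2) * Fintype.card (GVert s k) := by
      simpa [sum_add_distrib] using sum_le_sum fun p (_ : p ∈ univ) => hcopy p
    rw [hB, card_empty] at hcover
    omega
  have hsum : ∑ q, #(copy I q) = #(copy I p) :=
    sum_eq_single p (fun q _ hqp => by rw [copy_eq_empty_of_inr_mem hI (mem_toRight.1 hp) hqp,
      card_empty]) (by simp)
  have hB : #I.toRight ≤ s (k + 2) := (card_le_univ _).trans_eq (Fintype.card_fin _)
  have hS : 1 ≤ s (k + 2) := p.pos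
  have hm : m ≤ Fintype.card (GVert s k) := le_add_self.trans (hcopy p)
  have hmul := Nat.mul_le_mul_left (s (k + 2)) hm
  obtain h0 | h1 : copy I p = ∅ ∨ #I.toRight ≤ 1 := by
    refine or_iff_not_imp_left.2 fun hne => card_le_one.2 fun a ha b hb => ?_
    have hsingle q (hq : q ∈ I.toRight) : q = p :=
      by_contra fun hqp => hne (copy_eq_empty_of_inr_mem hI (mem_toRight.1 hq) (Ne.symm hqp))
    rw [hsingle a ha, hsingle b hb]
  · rw [h0, card_empty] at hsum
    omega
  · nlinarith [hcopy p]

-- The size `s₁ s₂ ⋯ s_{k+1}` of the two classes grown from the vertex classes of `K_{s₁,s₁}`.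
def baseClassCard (s : ℕ → ℕ) : ℕ → ℕ
  | 0 => s 1
  | k + 1 => s (k + 2) * baseClassCard s k

theorem card_add_baseClassCard_le {I : Finset (GVert s k)} (hI : (GGraph s k).IsIndepSet ↑I) :
    #I + baseClassCard s k ≤ Fintype.card (GVert s k) := by
  induction k with
  | zero => exact card_add_le_of_isIndepSet_zero hI
  | succ k ih => exact card_add_mul_le_of_isIndepSet_succ (fun _ => ih) hI

theorem baseClassCard_eq_two_mul_pow (s k : ℕ) :
    baseClassCard (fun i => if i = 1 then 2 * s else s) k = 2 * s ^ (k + 1) := by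
  induction k with
  | zero => simp [baseClassCard]
  | succ k ih => rw [baseClassCard, ih, if_neg (by omega)]; ring

end GGraph

theorem independent_set_bound_general (r s : ℕ) (hr : 2 ≤ r)
    (I : Finset (GVert (fun i => if i = 1 then 2 * s else s) (r - 2)))
    (hI : ∀ a ∈ I, ∀ b ∈ I, ¬ (GGraph (fun i => if i = 1 then 2 * s else s) (r - 2)).Adj a b) :
    I.card ≤ Fintype.card (GVert (fun i => if i = 1 then 2 * s else s) (r - 2))
      - 2 * s ^ (r - 1) := by
  obtain ⟨k, rfl⟩ : ∃ k, r = k + 2 := ⟨r - 2, by omega⟩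
  have hbound := GGraph.card_add_baseClassCard_le fun a ha b hb _ => hI a ha b hb
  rw [GGraph.baseClassCard_eq_two_mul_pow] at hbound
  exact Nat.le_sub_of_add_le hbound

/-- In `G_{r,s} = G_{r, 2s, s, …, s}` (`r, s ≥ 2`), every independent set
has at most `|G_{r,s}| − 2s^{r-1}` vertices. -/
theorem independent_set_bound (r s : ℕ) (hr : 2 ≤ r) (hs : 2 ≤ s)
    (I : Finset (GVert (fun i => if i = 1 then 2 * s else s) (r - 2)))
    (hI : ∀ a ∈ I, ∀ b ∈ I, ¬ (GGraph (fun i => if i = 1 then 2 * s else s) (r - 2)).Adj a b) :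
    I.card ≤ Fintype.card (GVert (fun i => if i = 1 then 2 * s else s) (r - 2))
      - 2 * s ^ (r - 1) :=
  independent_set_bound_general r s hr I hI
end

section
/- Let G be an (r+1)-saturated graph on n vertices with e(G) ≥ t_r(n) − εn², and suppose T ⊆ V(G) is a nonempty set with |T| ≤ d_r·ε·n such that G − T is r-partite with parts V₁, …, V_r. Then the number of non-edges of G joining two distinct classes Vᵢ, Vⱼ is at most (d_r + 1)·εn². -/
open SimpleGraph Finset
open scoped Classical

/-- A graph is `k`-saturated (maximal `K_k`-free) if it is `K_k`-free but adding any edge of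
the complement creates a `K_k`. -/
def Saturated {V : Type} (k : ℕ) (G : SimpleGraph V) : Prop :=
  G.CliqueFree k ∧
    ∀ v w : V, v ≠ w → ¬ G.Adj v w →
      ¬ (G ⊔ SimpleGraph.fromEdgeSet {s(v, w)}).CliqueFree k

/-! Colour `V` by `c : V → Fin r`, sending `P i` to `i` and `T` anywhere, and let `H` be the
complete `r`-partite graph of pairs with distinct colours. The cross non-edges of `G` are edges
of `H` missing from `G`, so there are at most `e(H) - e(G) + e(G \ H)` of them. Turán's theorem
gives `e(H) ≤ t_r(n) ≤ e(G) + εn²`, and since the classes `P i` are independent in `G`, every edge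
of `G \ H` meets `T`, so `e(G \ H) ≤ |T| n ≤ dεn²`. -/

namespace SimpleGraph

variable {V : Type*} [Fintype V]

theorem card_edgeFinset_le_turanEdges {r : ℕ} (hr : 0 < r) (H : SimpleGraph V)
    [DecidableRel H.Adj] (hH : H.CliqueFree (r + 1)) :
    #H.edgeFinset ≤ turanEdges r (Fintype.card V) := by
  obtain ⟨M, _, hM⟩ := exists_isTuranMaximal (V := V) hr
  rw [turanEdges,
    ← ((isTuranMaximal_iff_nonempty_iso_turanGraph hr).mp hM).some.card_edgeFinset_eq]
  exact hM.2 hH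

theorem IsVertexCover.card_edgeFinset_le [DecidableEq V] {G : SimpleGraph V}
    [Fintype G.edgeSet] {T : Finset V} (hT : G.IsVertexCover T) :
    #G.edgeFinset ≤ #T * Fintype.card V := by
  have hsub : G.edgeFinset ⊆ T.biUnion fun v => G.incidenceFinset v := by
    intro e he
    induction e with
    | h v w =>
      rw [mem_edgeFinset, mem_edgeSet] at he
      rcases hT he with hv | hw
      · exact mem_biUnion.mpr ⟨v, hv, (mem_incidenceFinset _ _ _).mpr ⟨he, Sym2.mem_mk_left v w⟩⟩
      · exact mem_biUnion.mpr ⟨w, hw, (mem_incidenceFinset _ _ _).mpr ⟨he, Sym2.mem_mk_right v w⟩⟩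
  calc #G.edgeFinset ≤ #(T.biUnion fun v => G.incidenceFinset v) := card_le_card hsub
    _ ≤ ∑ v ∈ T, #(G.incidenceFinset v) := card_biUnion_le
    _ ≤ ∑ _v ∈ T, Fintype.card V := sum_le_sum fun v _ => by
        rw [card_incidenceFinset_eq_degree]
        exact (G.degree_lt_card_verts v).le
    _ = #T * Fintype.card V := by rw [sum_const, smul_eq_mul]

theorem card_edgeFinset_sdiff_add_card_le [DecidableEq V] {G H : SimpleGraph V}
    [DecidableRel G.Adj] [DecidableRel H.Adj] {r : ℕ} (hr : 0 < r) (hH : H.CliqueFree (r + 1))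
    {T : Finset V} (hT : (G \ H).IsVertexCover T) :
    #(H.edgeFinset \ G.edgeFinset) + #G.edgeFinset
      ≤ turanEdges r (Fintype.card V) + #T * Fintype.card V := by
  rw [card_sdiff_add_card, union_comm, ← card_sdiff_add_card, add_comm]
  gcongr
  · exact card_edgeFinset_le_turanEdges hr H hH
  · rw [← edgeFinset_sdiff]
    exact hT.card_edgeFinset_le

end SimpleGraph

theorem exists_forall_mem_eq_of_pairwise_disjoint {V ι : Type*} [Nonempty ι]
    {P : ι → Finset V} (hdisj : Pairwise fun i j => Disjoint (P i) (P j)) :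
    ∃ c : V → ι, ∀ i, ∀ v ∈ P i, c v = i := by
  refine ⟨fun v => if h : ∃ i, v ∈ P i then h.choose else Classical.arbitrary ι,
    fun i v hv => ?_⟩
  have h : ∃ i, v ∈ P i := ⟨i, hv⟩
  dsimp only
  rw [dif_pos h]
  by_contra hne
  exact disjoint_left.mp (hdisj hne) h.choose_spec hv

theorem few_nonedges_general {V : Type} [Fintype V] [DecidableEq V] (G : SimpleGraph V)
    (r n : ℕ) (hr : 2 ≤ r) (hcard : Fintype.card V = n) (ε d : ℝ)
    (he : (turanEdges r n : ℝ) - ε * (n : ℝ) ^ 2 ≤ (G.edgeFinset.card : ℝ))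
    (T : Finset V) (hT : (T.card : ℝ) ≤ d * ε * n)
    (P : Fin r → Finset V)
    (hdisj : ∀ i j : Fin r, i ≠ j → Disjoint (P i) (P j))
    (hcover : Finset.univ.biUnion P = Finset.univ \ T)
    (hpart : ∀ i : Fin r, ∀ v ∈ P i, ∀ w ∈ P i, ¬ G.Adj v w) :
    (((Finset.univ.filter fun e : Sym2 V =>
        ∃ a b : V, e = s(a, b) ∧ ¬ G.Adj a b ∧
          ∃ i j : Fin r, i ≠ j ∧ a ∈ P i ∧ b ∈ P j).card : ℝ))
      ≤ (d + 1) * ε * (n : ℝ) ^ 2 := by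
  have : NeZero r := ⟨by omega⟩
  obtain ⟨c, hc⟩ := exists_forall_mem_eq_of_pairwise_disjoint hdisj
  set H := (⊤ : SimpleGraph (Fin r)).comap c
  have hcoverT : (G \ H).IsVertexCover T := by
    intro v w ⟨hvw, hH⟩
    by_contra! hout
    obtain ⟨i, -, hv⟩ := mem_biUnion.mp (hcover ▸ mem_sdiff.mpr ⟨mem_univ v, hout.1⟩)
    obtain ⟨j, -, hw⟩ := mem_biUnion.mp (hcover ▸ mem_sdiff.mpr ⟨mem_univ w, hout.2⟩)
    have hij : i = j := by simpa [H, hc i v hv, hc j w hw] using hH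
    exact hpart i v hv w (hij ▸ hw) hvw
  have hcount :
      (#(H.edgeFinset \ G.edgeFinset) : ℝ) + #G.edgeFinset ≤ turanEdges r n + #T * n := by
    exact_mod_cast hcard ▸ card_edgeFinset_sdiff_add_card_le (by omega)
      (Colorable.cliqueFree ⟨Hom.comap c ⊤⟩ (lt_add_one r)) hcoverT
  have hTn : (#T : ℝ) * n ≤ d * ε * n * n := by gcongr
  refine le_trans (Nat.cast_le.mpr (card_le_card (t := H.edgeFinset \ G.edgeFinset) ?_)) ?_
  · rintro _ he
    obtain ⟨a, b, rfl, hab, i, j, hij, ha, hb⟩ := (mem_filter.mp he).2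
    simpa [H, hc i a ha, hc j b hb] using ⟨hij, hab⟩
  · linarith

/-- Claim `few_nonedges`. Let `G` be `(r+1)`-saturated on `n` vertices
with `e(G) ≥ t_r(n) − εn²`, and let `T` be a nonempty set with `|T| ≤ d·ε·n` such that
`G − T` is `r`-partite with classes `P 0, …, P (r-1)`. Then the number of non-edges of `G`
joining two distinct classes is at most `(d + 1)εn²`. -/
theorem few_nonedges {V : Type} [Fintype V] [DecidableEq V] (G : SimpleGraph V)
    (r n : ℕ) (hr : 2 ≤ r) (hcard : Fintype.card V = n) (ε d : ℝ)
    (hε : 1 / (2 * (r : ℝ) * n) ≤ ε)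
    (hsat : Saturated (r + 1) G)
    (he : (turanEdges r n : ℝ) - ε * (n : ℝ) ^ 2 ≤ (G.edgeFinset.card : ℝ))
    (T : Finset V) (hTne : T.Nonempty) (hT : (T.card : ℝ) ≤ d * ε * n)
    (P : Fin r → Finset V)
    (hdisj : ∀ i j : Fin r, i ≠ j → Disjoint (P i) (P j))
    (hcover : Finset.univ.biUnion P = Finset.univ \ T)
    (hpart : ∀ i : Fin r, ∀ v ∈ P i, ∀ w ∈ P i, ¬ G.Adj v w) :
    (((Finset.univ.filter fun e : Sym2 V =>
        ∃ a b : V, e = s(a, b) ∧ ¬ G.Adj a b ∧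
          ∃ i j : Fin r, i ≠ j ∧ a ∈ P i ∧ b ∈ P j).card : ℝ))
      ≤ (d + 1) * ε * (n : ℝ) ^ 2 :=
  few_nonedges_general G r n hr hcard ε d he T hT P hdisj hcover hpart
end
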